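/- arXiv:1611.07260 — 3 statements merged into one kernel-verified Lean document; each statement's English description precedes it below -/
import Mathlib

section
/- A subset L of the natural numbers including 0 is the leaf distance set of some vertex in some finite tree if and only if it is not the case that L contains both 0 and 1 and has cardinality at least 3. Equivalently, L fails to be admissible exactly when {0,1} ⊆ L and |L| ≥ 3. -/
/-- The leaf distance set of the vertex `v` in the graph `G`: the set of distances from
`v` to the leaves (vertices of degree at most 1) of `G`. -/
def leafDistSet {V : Type} (G : SimpleGraph V) (v : V) : Set ℕ :=
  {d : ℕ | ∃ u : V, Nat.card (G.neighborSet u) ≤ 1 ∧ G.dist v u = d}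

/-- A set `L ⊆ ℕ ∪ {0}` is admissible if it is the leaf distance set of some vertex of
some finite tree. -/
def Admissible (L : Set ℕ) : Prop :=
  ∃ (V : Type) (_ : Fintype V) (G : SimpleGraph V) (v : V),
    G.IsTree ∧ L = leafDistSet G v

/-!
If `0, 1 ∈ L(v)`, then `v` is a leaf whose only neighbour is again a leaf, so the tree is a single
edge and `L(v) = {0, 1}`. Every other set is realised by a spider, i.e. paths (legs) glued at a
centre. Seen from the centre, legs of lengths `d ∈ L` realise `L` if `0 ∉ L` (two legs of each
length, so that the centre is not a leaf), and at most one leg realises `{0}` and `{0, 1}`. If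
`0 ∈ L` and `1 ∉ L`, let `v` be the tip of a leg of length one: its distance to any other vertex is
one more than the distance from the centre, so legs of lengths `d - 1`, `d ∈ L \ {0}`, do it.
-/

namespace SimpleGraph

variable {V : Type*} {G : SimpleGraph V}

theorem Walk.apply_le_apply_add_length {f : V → ℕ} (hf : ∀ ⦃x y⦄, G.Adj x y → f y ≤ f x + 1)
    {u v : V} (p : G.Walk u v) : f v ≤ f u + p.length := by
  induction p with
  | nil => simp
  | cons hxy _ ih =>
    have := hf hxy
    rw [length_cons]
    omega

theorem Reachable.apply_le_apply_add_dist {f : V → ℕ} (hf : ∀ ⦃x y⦄, G.Adj x y → f y ≤ f x + 1)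
    {u v : V} (huv : G.Reachable u v) : f v ≤ f u + G.dist u v := by
  obtain ⟨p, hp⟩ := huv.exists_walk_length_eq_dist
  exact hp ▸ p.apply_le_apply_add_length hf

theorem Connected.dist_eq_dist_add_one_of_neighborSet_eq_singleton (hG : G.Connected)
    {v c x : V} (hv : G.neighborSet v = {c}) (hx : x ≠ v) :
    G.dist v x = G.dist c x + 1 := by
  have hvc : G.Adj v c := (Set.ext_iff.mp hv c).mpr rfl
  refine le_antisymm ?_ ?_
  · have := hG.dist_triangle (u := v) (v := c) (w := x)
    rwa [dist_eq_one_iff_adj.mpr hvc, add_comm] at this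
  · obtain ⟨p, hp⟩ := hG.exists_walk_length_eq_dist v x
    cases p with
    | nil => exact absurd rfl hx
    | cons hvw q =>
      obtain rfl : _ = c := (Set.ext_iff.mp hv _).mp hvw
      rw [← hp, Walk.length_cons]
      exact Nat.add_le_add_right (dist_le q) 1

theorem card_neighborSet_le_one_iff [Finite V] {v : V} :
    Nat.card (G.neighborSet v) ≤ 1 ↔ ∀ ⦃x y⦄, G.Adj v x → G.Adj v y → x = y := by
  rw [Nat.card_coe_set_eq, Set.ncard_le_one_iff]
  rfl

theorem neighborSet_eq_singleton_of_card_le_one [Finite V] {v c : V}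
    (hv : Nat.card (G.neighborSet v) ≤ 1) (hvc : G.Adj v c) : G.neighborSet v = {c} :=
  Set.eq_singleton_iff_unique_mem.mpr ⟨hvc, fun _ hx => card_neighborSet_le_one_iff.mp hv hx hvc⟩

def parentGraph (par : V → V) : SimpleGraph V := fromRel fun x y => par x = y

section ParentGraph

variable {par : V → V} {depth : V → ℕ} {r : V}

theorem parentGraph_adj {x y : V} :
    (parentGraph par).Adj x y ↔ x ≠ y ∧ (par x = y ∨ par y = x) :=
  fromRel_adj _ _ _

theorem parentGraph_adj_parent (hdepth : ∀ x ≠ r, depth (par x) + 1 = depth x) {x : V}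
    (hx : x ≠ r) : (parentGraph par).Adj x (par x) := by
  have := hdepth x hx
  exact parentGraph_adj.mpr ⟨fun hpx => by rw [← hpx] at this; omega, Or.inl rfl⟩

theorem depth_le_of_parentGraph_adj (hr : par r = r)
    (hdepth : ∀ x ≠ r, depth (par x) + 1 = depth x) ⦃x y : V⦄ (hxy : (parentGraph par).Adj x y) :
    depth y ≤ depth x + 1 := by
  obtain ⟨hne, rfl | rfl⟩ := parentGraph_adj.mp hxy
  · have hx : x ≠ r := by rintro rfl; exact hne hr.symm
    have := hdepth x hx
    omega
  · have hy : y ≠ r := by rintro rfl; exact hne hr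
    exact (hdepth y hy).ge

theorem parentGraph_exists_walk_to_root (hdepth : ∀ x ≠ r, depth (par x) + 1 = depth x)
    (h0 : depth r = 0) (x : V) : ∃ p : (parentGraph par).Walk x r, p.length = depth x := by
  induction hn : depth x using Nat.strong_induction_on generalizing x with
  | _ n ih =>
    by_cases hx : x = r
    · subst hx
      exact ⟨.nil, by rw [Walk.length_nil, ← hn, h0]⟩
    · obtain ⟨p, hp⟩ := ih _ (hn ▸ hdepth x hx ▸ Nat.lt_succ_self _) (par x) rfl
      refine ⟨.cons (parentGraph_adj_parent hdepth hx) p, ?_⟩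
      rw [Walk.length_cons, hp, ← hn, hdepth x hx]

theorem parentGraph_connected (hdepth : ∀ x ≠ r, depth (par x) + 1 = depth x)
    (h0 : depth r = 0) : (parentGraph par).Connected :=
  connected_iff_exists_forall_reachable _ |>.mpr
    ⟨r, fun x => ⟨(parentGraph_exists_walk_to_root hdepth h0 x).choose.reverse⟩⟩

theorem parentGraph_dist_root (hr : par r = r) (hdepth : ∀ x ≠ r, depth (par x) + 1 = depth x)
    (h0 : depth r = 0) (x : V) : (parentGraph par).dist r x = depth x := by
  obtain ⟨p, hp⟩ := parentGraph_exists_walk_to_root hdepth h0 x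
  refine le_antisymm ((dist_le p.reverse).trans_eq (by rw [Walk.length_reverse, hp])) ?_
  have := Reachable.apply_le_apply_add_dist (depth_le_of_parentGraph_adj hr hdepth)
    ((parentGraph_connected hdepth h0).preconnected r x)
  rwa [h0, zero_add] at this

/-- `x ↦ s(x, par x)` is a bijection from the non-root vertices onto the edges. -/
theorem parentGraph_card_edgeSet_add_one [Finite V] (hr : par r = r)
    (hdepth : ∀ x ≠ r, depth (par x) + 1 = depth x) :
    Nat.card (parentGraph par).edgeSet + 1 = Nat.card V := by
  classical
  let e : {x // x ≠ r} → (parentGraph par).edgeSet := fun x =>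
    ⟨s(x, par x), parentGraph_adj_parent hdepth x.2⟩
  have he : e.Bijective := by
    constructor
    · rintro ⟨x, hx⟩ ⟨y, hy⟩ hxy
      have hxy : s(x, par x) = s(y, par y) := congrArg Subtype.val hxy
      rcases Sym2.eq_iff.mp hxy with ⟨hxy, -⟩ | ⟨hxpy, hpxy⟩
      · exact Subtype.ext hxy
      · have hx' := hdepth x hx
        have hy' := hdepth y hy
        rw [hpxy] at hx'
        rw [← hxpy] at hy'
        omega
    · rintro ⟨e', he'⟩
      induction e' using Sym2.ind with | _ x y =>
      obtain ⟨hne, hpx | hpy⟩ := parentGraph_adj.mp he'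
      · exact ⟨⟨x, fun hx => hne (by rw [← hpx, hx, hr])⟩, Subtype.ext (by simp [e, hpx])⟩
      · exact ⟨⟨y, fun hy => hne (by rw [← hpy, hy, hr])⟩,
          Subtype.ext (by simp [e, hpy, Sym2.eq_swap])⟩
  rw [← Nat.card_eq_of_bijective e he, ← Finite.card_option,
    Nat.card_congr (Equiv.optionSubtypeNe r)]

theorem parentGraph_isTree [Finite V] (hr : par r = r)
    (hdepth : ∀ x ≠ r, depth (par x) + 1 = depth x) (h0 : depth r = 0) :
    (parentGraph par).IsTree :=
  isTree_iff_connected_and_card.mpr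
    ⟨parentGraph_connected hdepth h0, parentGraph_card_edgeSet_add_one hr hdepth⟩

end ParentGraph

end SimpleGraph

open SimpleGraph

theorem leafDistSet_subset_of_zero_mem_of_one_mem {V : Type} [Finite V] {G : SimpleGraph V}
    (hG : G.Connected) {v : V} (h0 : 0 ∈ leafDistSet G v) (h1 : 1 ∈ leafDistSet G v) :
    leafDistSet G v ⊆ {0, 1} := by
  obtain ⟨v', hv, hvv'⟩ := h0
  obtain rfl := hG.dist_eq_zero_iff.mp hvv'
  obtain ⟨u, hu, hvu⟩ := h1
  have hvu' : G.Adj v u := dist_eq_one_iff_adj.mp hvu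
  have hNv := neighborSet_eq_singleton_of_card_le_one hv hvu'
  have hNu := neighborSet_eq_singleton_of_card_le_one hu hvu'.symm
  rintro _ ⟨x, -, rfl⟩
  by_cases hxv : x = v
  · simp [hxv]
  by_cases hxu : x = u
  · simp [hxu, hvu]
  -- a third vertex would be one step further from each of the two leaves than from the other
  have := hG.dist_eq_dist_add_one_of_neighborSet_eq_singleton hNv hxv
  have := hG.dist_eq_dist_add_one_of_neighborSet_eq_singleton hNu hxu
  omega

section Spider

variable {ι : Type} (ℓ : ι → ℕ)

/-- The centre is `none`; leg `i` is the path of the vertices `(i, p)`, `p ≤ ℓ i`, at depth `p + 1`,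
so it has length `ℓ i + 1`. -/
abbrev SpiderVertex := Option {x : ι × ℕ // x.2 ≤ ℓ x.1}

instance [Finite ι] : Finite {x : ι × ℕ // x.2 ≤ ℓ x.1} :=
  Set.Finite.to_subtype <| (Set.finite_iUnion fun i =>
    (Set.finite_singleton i).prod (Set.finite_Iic (ℓ i))).subset fun x (hx : x.2 ≤ ℓ x.1) =>
      Set.mem_iUnion.mpr ⟨x.1, by simpa using hx⟩

def spiderParent : SpiderVertex ℓ → SpiderVertex ℓ
  | some ⟨(i, p + 1), hp⟩ => some ⟨(i, p), Nat.le_of_succ_le hp⟩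
  | _ => none

def spiderDepth : SpiderVertex ℓ → ℕ
  | none => 0
  | some x => x.1.2 + 1

def spider : SimpleGraph (SpiderVertex ℓ) := parentGraph (spiderParent ℓ)

def spiderTip (i : ι) : SpiderVertex ℓ := some ⟨(i, ℓ i), le_rfl⟩

variable {ℓ}

theorem spiderDepth_spiderParent {x : SpiderVertex ℓ} (hx : x ≠ none) :
    spiderDepth ℓ (spiderParent ℓ x) + 1 = spiderDepth ℓ x := by
  rcases x with _ | ⟨⟨i, _ | p⟩, hp⟩
  · exact absurd rfl hx
  · rfl
  · rfl

theorem spider_isTree [Finite ι] : (spider ℓ).IsTree :=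
  parentGraph_isTree rfl (fun _ => spiderDepth_spiderParent) rfl

theorem admissible_leafDistSet_spider [Finite ι] (v : SpiderVertex ℓ) :
    Admissible (leafDistSet (spider ℓ) v) :=
  ⟨_, Fintype.ofFinite _, _, v, spider_isTree, rfl⟩

theorem spider_dist_none (x : SpiderVertex ℓ) : (spider ℓ).dist none x = spiderDepth ℓ x :=
  parentGraph_dist_root rfl (fun _ => spiderDepth_spiderParent) rfl x

theorem spider_adj_spiderParent {x : SpiderVertex ℓ} (hx : x ≠ none) :
    (spider ℓ).Adj x (spiderParent ℓ x) :=
  parentGraph_adj_parent (fun _ => spiderDepth_spiderParent) hx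

theorem spider_adj_none_iff {y : SpiderVertex ℓ} :
    (spider ℓ).Adj none y ↔ ∃ i, y = some ⟨(i, 0), Nat.zero_le _⟩ := by
  rw [spider, parentGraph_adj]
  rcases y with _ | ⟨⟨i, _ | p⟩, hp⟩ <;> simp [spiderParent]

theorem spiderParent_eq_some {y : SpiderVertex ℓ} {i : ι} {p : ℕ} {hp : p ≤ ℓ i}
    (hy : spiderParent ℓ y = some ⟨(i, p), hp⟩) : ∃ h, y = some ⟨(i, p + 1), h⟩ := by
  rcases y with _ | ⟨⟨j, _ | q⟩, hq⟩ <;>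
    simp only [spiderParent, reduceCtorEq, Option.some.injEq, Subtype.mk.injEq,
      Prod.mk.injEq] at hy
  obtain ⟨rfl, rfl⟩ := hy
  exact ⟨hq, rfl⟩

theorem spider_card_neighborSet_none [Finite ι] :
    Nat.card ((spider ℓ).neighborSet none) = Nat.card ι := by
  have : (spider ℓ).neighborSet none = Set.range fun i => some ⟨(i, 0), Nat.zero_le _⟩ := by
    ext y
    simp [spider_adj_none_iff, eq_comm]
  rw [this, Nat.card_range_of_injective fun i j hij => by simpa using hij]

theorem spider_neighborSet_spiderTip (i : ι) :
    (spider ℓ).neighborSet (spiderTip ℓ i) = {spiderParent ℓ (spiderTip ℓ i)} := by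
  ext y
  rw [mem_neighborSet, Set.mem_singleton_iff]
  refine ⟨fun h => ?_, fun h => h ▸ spider_adj_spiderParent (Option.some_ne_none _)⟩
  obtain ⟨-, hy | hy⟩ := parentGraph_adj.mp h
  · exact hy.symm
  · obtain ⟨h, -⟩ := spiderParent_eq_some hy
    exact absurd h (Nat.not_succ_le_self _)

theorem spider_card_neighborSet_le_one_iff [Finite ι] {u : SpiderVertex ℓ} :
    Nat.card ((spider ℓ).neighborSet u) ≤ 1 ↔
      (∃ i, u = spiderTip ℓ i) ∨ (u = none ∧ Nat.card ι ≤ 1) := by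
  rcases u with _ | ⟨⟨i, p⟩, hp⟩
  · rw [spider_card_neighborSet_none]
    simp [spiderTip]
  obtain hlt | heq := hp.lt_or_eq
  · have hchild : (spider ℓ).Adj (some ⟨(i, p), hp⟩) (some ⟨(i, p + 1), hlt⟩) :=
      (spider_adj_spiderParent (x := some ⟨(i, p + 1), hlt⟩) (Option.some_ne_none _)).symm
    have hparent := spider_adj_spiderParent (x := some ⟨(i, p), hp⟩) (Option.some_ne_none _)
    have hne : spiderParent ℓ (some ⟨(i, p), hp⟩) ≠ some ⟨(i, p + 1), hlt⟩ := fun h => by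
      have := spiderDepth_spiderParent (x := some ⟨(i, p), hp⟩) (Option.some_ne_none _)
      rw [h] at this
      simp only [spiderDepth] at this
      omega
    refine iff_of_false (fun h => hne (card_neighborSet_le_one_iff.mp h hparent hchild)) ?_
    rintro (⟨j, hj⟩ | ⟨h, -⟩)
    · simp only [spiderTip, Option.some.injEq, Subtype.mk.injEq, Prod.mk.injEq] at hj
      obtain ⟨rfl, rfl⟩ := hj
      exact lt_irrefl _ hlt
    · exact Option.some_ne_none _ h
  · have htip : (some ⟨(i, p), hp⟩ : SpiderVertex ℓ) = spiderTip ℓ i :=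
      congrArg some (Subtype.ext (Prod.ext rfl heq))
    simp [htip, spider_neighborSet_spiderTip]

theorem leafDistSet_spider_none [Finite ι] :
    leafDistSet (spider ℓ) none = Set.range (fun i => ℓ i + 1) ∪ {d | d = 0 ∧ Nat.card ι ≤ 1} := by
  ext d
  simp only [leafDistSet, spider_card_neighborSet_le_one_iff, spider_dist_none, Set.mem_ofPred_eq,
    Set.mem_union, Set.mem_range]
  constructor
  · rintro ⟨u, ⟨i, rfl⟩ | ⟨rfl, hι⟩, rfl⟩
    · exact Or.inl ⟨i, rfl⟩
    · exact Or.inr ⟨rfl, hι⟩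
  · rintro (⟨i, rfl⟩ | ⟨rfl, hι⟩)
    · exact ⟨spiderTip ℓ i, Or.inl ⟨i, rfl⟩, rfl⟩
    · exact ⟨none, Or.inr ⟨rfl, hι⟩, rfl⟩

theorem leafDistSet_spider_spiderTip [Finite ι] (hι : 2 ≤ Nat.card ι) {i₀ : ι} (h₀ : ℓ i₀ = 0) :
    leafDistSet (spider ℓ) (spiderTip ℓ i₀) = insert 0 ((fun i => ℓ i + 2) '' {i₀}ᶜ) := by
  have hN : (spider ℓ).neighborSet (spiderTip ℓ i₀) = {none} := by
    have htip : spiderTip ℓ i₀ = some ⟨(i₀, 0), Nat.zero_le _⟩ :=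
      congrArg some (Subtype.ext (Prod.ext rfl h₀))
    rw [spider_neighborSet_spiderTip, htip]
    rfl
  have hdist (i : ι) (hi : i ≠ i₀) :
      (spider ℓ).dist (spiderTip ℓ i₀) (spiderTip ℓ i) = ℓ i + 2 := by
    have hne : spiderTip ℓ i ≠ spiderTip ℓ i₀ := fun h => by
      simp only [spiderTip, Option.some.injEq, Subtype.mk.injEq, Prod.mk.injEq] at h
      exact hi h.1
    rw [spider_isTree.connected.dist_eq_dist_add_one_of_neighborSet_eq_singleton hN hne,
      spider_dist_none]
    rfl
  ext d
  simp only [leafDistSet, spider_card_neighborSet_le_one_iff, Set.mem_ofPred_eq,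
    Set.mem_insert_iff, Set.mem_image, Set.mem_compl_singleton_iff]
  constructor
  · rintro ⟨u, ⟨i, rfl⟩ | ⟨rfl, hι'⟩, rfl⟩
    · by_cases hi : i = i₀
      · exact Or.inl (hi ▸ dist_self)
      · exact Or.inr ⟨i, hi, (hdist i hi).symm⟩
    · omega
  · rintro (rfl | ⟨i, hi, rfl⟩)
    · exact ⟨spiderTip ℓ i₀, Or.inl ⟨i₀, rfl⟩, dist_self⟩
    · exact ⟨spiderTip ℓ i, Or.inl ⟨i, rfl⟩, hdist i hi⟩

end Spider

section Constructions

variable {L : Set ℕ}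

theorem admissible_of_zero_notMem (hfin : L.Finite) (hne : L.Nonempty) (h0 : 0 ∉ L) :
    Admissible L := by
  have := hfin.to_subtype
  have := hne.to_subtype
  have hpos {d : ℕ} (hd : d ∈ L) : 1 ≤ d := Nat.one_le_iff_ne_zero.mpr (ne_of_mem_of_not_mem hd h0)
  have hι : 2 ≤ Nat.card (L × Bool) := by
    rw [Nat.card_prod, Nat.card_eq_fintype_card (α := Bool), Fintype.card_bool]
    have := Nat.card_pos (α := L)
    omega
  convert admissible_leafDistSet_spider (ℓ := fun x : L × Bool => x.1 - 1) none
  rw [leafDistSet_spider_none, Set.union_eq_left.mpr fun d hd => absurd hd.2 (by omega)]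
  ext d
  refine ⟨fun hd => ⟨(⟨d, hd⟩, true), Nat.sub_add_cancel (hpos hd)⟩, ?_⟩
  rintro ⟨⟨⟨e, he⟩, -⟩, rfl⟩
  show e - 1 + 1 ∈ L
  rwa [Nat.sub_add_cancel (hpos he)]

theorem admissible_of_zero_mem_of_subset (h0 : 0 ∈ L) (hL : L ⊆ {0, 1}) : Admissible L := by
  have hone {d : ℕ} (hd : d ∈ L \ {0}) : d = 1 := (hL hd.1).resolve_left hd.2
  have : Finite ↥(L \ {0}) := ((Set.finite_singleton 1).subset fun _ => hone).to_subtype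
  have hι : Nat.card ↥(L \ {0}) ≤ 1 := Finite.card_le_one_iff_subsingleton.mpr
    ⟨fun a b => Subtype.ext ((hone a.2).trans (hone b.2).symm)⟩
  convert admissible_leafDistSet_spider (ℓ := fun d : ↥(L \ {0}) => d.1 - 1) none
  rw [leafDistSet_spider_none]
  ext d
  simp only [Set.mem_union, Set.mem_range, Set.mem_ofPred_eq, hι, and_true]
  constructor
  · intro hd
    rcases eq_or_ne d 0 with rfl | hd0
    · exact Or.inr rfl
    · exact Or.inl ⟨⟨d, hd, hd0⟩, Nat.sub_add_cancel (Nat.one_le_iff_ne_zero.mpr hd0)⟩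
  · rintro (⟨⟨e, he⟩, rfl⟩ | rfl)
    · exact (Nat.sub_add_cancel (Nat.one_le_iff_ne_zero.mpr he.2)).symm ▸ he.1
    · exact h0

theorem admissible_of_zero_mem_of_one_notMem (hfin : L.Finite) (h0 : 0 ∈ L) (h1 : 1 ∉ L)
    (hL : (L \ {0}).Nonempty) : Admissible L := by
  have := (hfin.sdiff (t := {0})).to_subtype
  have := hL.to_subtype
  have htwo {d : ℕ} (hd : d ∈ L \ {0}) : 2 ≤ d := by
    have := ne_of_mem_of_not_mem hd.1 h1
    have := hd.2
    simp only [Set.mem_singleton_iff] at this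
    omega
  have hι : 2 ≤ Nat.card (Option ↥(L \ {0})) := by
    rw [Finite.card_option]
    have := Nat.card_pos (α := ↥(L \ {0}))
    omega
  convert admissible_leafDistSet_spider
    (ℓ := fun i : Option ↥(L \ {0}) => i.elim 0 fun d => d.1 - 2) (spiderTip _ none)
  rw [leafDistSet_spider_spiderTip hι rfl]
  ext d
  constructor
  · intro hd
    rcases eq_or_ne d 0 with rfl | hd0
    · exact Or.inl rfl
    · exact Or.inr ⟨some ⟨d, hd, hd0⟩, Option.some_ne_none _, Nat.sub_add_cancel (htwo ⟨hd, hd0⟩)⟩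
  · rintro (rfl | ⟨_ | ⟨e, he⟩, hne, rfl⟩)
    · exact h0
    · exact absurd rfl hne
    · show e - 2 + 2 ∈ L
      rw [Nat.sub_add_cancel (htwo he)]
      exact he.1

end Constructions

/-- A (finite, nonempty) subset `L` of the natural numbers (including `0`)
is the leaf distance set of some vertex in some finite tree if and only if it is not the
case that `L` contains both `0` and `1` and has cardinality at least `3`. -/
theorem admissible_iff (L : Set ℕ) (hfin : L.Finite) (hne : L.Nonempty) :
    Admissible L ↔ ¬ (0 ∈ L ∧ 1 ∈ L ∧ 3 ≤ L.ncard) := by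
  constructor
  · rintro ⟨V, _, G, v, hG, rfl⟩ ⟨h0, h1, h3⟩
    have := Set.ncard_le_ncard (leafDistSet_subset_of_zero_mem_of_one_mem hG.connected h0 h1)
    rw [Set.ncard_pair zero_ne_one] at this
    omega
  · intro hL
    by_cases h0 : 0 ∈ L
    swap
    · exact admissible_of_zero_notMem hfin hne h0
    by_cases h01 : L ⊆ {0, 1}
    · exact admissible_of_zero_mem_of_subset h0 h01
    obtain ⟨d, hdL, hd⟩ := Set.not_subset.mp h01
    have h1 : 1 ∉ L := by
      intro h1
      have hle : L.ncard ≤ ({0, 1} : Set ℕ).ncard := by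
        rw [Set.ncard_pair zero_ne_one]
        by_contra! h3
        exact hL ⟨h0, h1, h3⟩
      exact h01 (Set.eq_of_subset_of_ncard_le (Set.pair_subset h0 h1) hle hfin).ge
    exact admissible_of_zero_mem_of_one_notMem hfin h0 h1 ⟨d, hdL, fun h => hd (Or.inl h)⟩
end

section
/- Let 0 < α < 1 and p = n^{-α}. Then a.a.s. every subset X of the vertices of G(n,p) with 2 ≤ |X| ≤ n-2 contains a vertex that has at least one neighbor and at least one non-neighbor outside X. Moreover, the probability that some such X has no such vertex is at most (2n e^{-p(⌊n/2⌋+1)}) / ((1-p)(1 - n e^{-p(⌊n/2⌋+1)})) for large n. -/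
open Filter

-- `graphProb n p A` is the probability that the Erdős–Rényi random graph `G(n,p)` (each
-- of the `C(n,2)` possible edges present independently with probability `p`) satisfies
-- the property `A`.
open Classical in
noncomputable def graphProb (n : ℕ) (p : ℝ) (A : SimpleGraph (Fin n) → Prop) : ℝ :=
  ∑ G : SimpleGraph (Fin n),
    if A G then p ^ (Nat.card G.edgeSet) * (1 - p) ^ (n.choose 2 - Nat.card G.edgeSet) else 0

-- Every nontrivial subset `X` (with `2 ≤ |X| ≤ n-2`) contains a vertex having at least
-- one neighbor and at least one non-neighbor outside `X` (an `X`-outside-common vertex).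
def hasOutsideCommon (n : ℕ) (G : SimpleGraph (Fin n)) : Prop :=
  ∀ X : Finset (Fin n), 2 ≤ X.card → X.card ≤ n - 2 →
    ∃ v ∈ X, (∃ w, w ∉ X ∧ G.Adj v w) ∧ (∃ w, w ∉ X ∧ ¬ G.Adj v w)

section AuxiliaryForAasOutsideCommon
open Finset

set_option linter.unusedSectionVars false
set_option linter.unusedVariables false

noncomputable def ind (Q : Prop) (x : ℝ) : ℝ := open Classical in if Q then x else 0

lemma ind_pos {Q : Prop} (h : Q) (x : ℝ) : ind Q x = x := by unfold ind; exact if_pos h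
lemma ind_neg {Q : Prop} (h : ¬ Q) (x : ℝ) : ind Q x = 0 := by unfold ind; exact if_neg h
lemma ind_congr {Q R : Prop} (h : Q ↔ R) (x : ℝ) : ind Q x = ind R x := by
  by_cases hq : Q
  · rw [ind_pos hq, ind_pos (h.mp hq)]
  · rw [ind_neg hq, ind_neg (fun hr => hq (h.mpr hr))]
lemma ind_nonneg {Q : Prop} {x : ℝ} (hx : 0 ≤ x) : 0 ≤ ind Q x := by
  by_cases hq : Q
  · rw [ind_pos hq]; exact hx
  · rw [ind_neg hq]
lemma ind_le {Q : Prop} {x : ℝ} (hx : 0 ≤ x) : ind Q x ≤ x := by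
  by_cases hq : Q
  · rw [ind_pos hq]
  · rw [ind_neg hq]; exact hx

section Cyl
variable {J : Type*} [Fintype J] [DecidableEq J]

noncomputable def wt (p : ℝ) (b : Bool) : ℝ := if b then p else 1 - p

noncomputable def cfgSum (p : ℝ) (A : (J → Bool) → Prop) : ℝ :=
  ∑ f : J → Bool, ind (A f) (∏ e, wt p (f e))

lemma wt_nonneg {p : ℝ} (hp0 : 0 ≤ p) (hp1 : p ≤ 1) (b : Bool) : 0 ≤ wt p b := by
  cases b <;> simp [wt] <;> linarith

lemma prodwt_nonneg {p : ℝ} (hp0 : 0 ≤ p) (hp1 : p ≤ 1) (f : J → Bool) :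
    0 ≤ ∏ e, wt p (f e) :=
  Finset.prod_nonneg fun e _ => wt_nonneg hp0 hp1 _

lemma sum_prod_wt (p : ℝ) : ∑ f : J → Bool, ∏ e, wt p (f e) = 1 := by
  rw [← Fintype.prod_sum (fun (_ : J) (b : Bool) => wt p b)]
  have : ∑ b : Bool, wt p b = 1 := by simp [wt]
  rw [Fintype.prod_congr _ _ (fun _ => this), Finset.prod_const_one]

lemma cfgSum_nonneg {p : ℝ} (hp0 : 0 ≤ p) (hp1 : p ≤ 1) (A : (J → Bool) → Prop) :
    0 ≤ cfgSum p A :=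
  Finset.sum_nonneg fun f _ => ind_nonneg (prodwt_nonneg hp0 hp1 f)

lemma cfgSum_mono {p : ℝ} (hp0 : 0 ≤ p) (hp1 : p ≤ 1) {A B : (J → Bool) → Prop}
    (h : ∀ f, A f → B f) : cfgSum p A ≤ cfgSum p B := by
  refine Finset.sum_le_sum fun f _ => ?_
  by_cases hA : A f
  · rw [ind_pos hA, ind_pos (h f hA)]
  · rw [ind_neg hA]
    exact ind_nonneg (prodwt_nonneg hp0 hp1 f)

lemma cfgSum_true (p : ℝ) : cfgSum p (fun _ : J → Bool => True) = 1 := by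
  unfold cfgSum
  rw [show ∀ (fn : (J → Bool) → ℝ), (∑ f : J → Bool, ind True (fn f)) = ∑ f, fn f from
    fun fn => Finset.sum_congr rfl fun f _ => ind_pos trivial _]
  exact sum_prod_wt p

lemma cfgSum_le_one {p : ℝ} (hp0 : 0 ≤ p) (hp1 : p ≤ 1) (A : (J → Bool) → Prop) :
    cfgSum p A ≤ 1 :=
  le_trans (cfgSum_mono hp0 hp1 (fun _ _ => trivial)) (le_of_eq (cfgSum_true p))

lemma cfgSum_union {p : ℝ} (hp0 : 0 ≤ p) (hp1 : p ≤ 1) {ι : Type*} (s : Finset ι)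
    {A : (J → Bool) → Prop} {B : ι → (J → Bool) → Prop}
    (h : ∀ f, A f → ∃ x ∈ s, B x f) :
    cfgSum p A ≤ ∑ x ∈ s, cfgSum p (B x) := by
  have step : ∀ f : J → Bool, ind (A f) (∏ e, wt p (f e)) ≤
      ∑ x ∈ s, ind (B x f) (∏ e, wt p (f e)) := by
    intro f
    have hnn : ∀ x ∈ s, 0 ≤ ind (B x f) (∏ e, wt p (f e)) := by
      intro x _; exact ind_nonneg (prodwt_nonneg hp0 hp1 f)
    by_cases hA : A f
    · obtain ⟨x, hx, hB⟩ := h f hA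
      calc ind (A f) (∏ e, wt p (f e)) = ind (B x f) (∏ e, wt p (f e)) := by
            rw [ind_pos hA, ind_pos hB]
        _ ≤ ∑ x ∈ s, ind (B x f) (∏ e, wt p (f e)) := Finset.single_le_sum hnn hx
    · rw [ind_neg hA]
      exact Finset.sum_nonneg hnn
  calc cfgSum p A ≤ ∑ f : J → Bool, ∑ x ∈ s, ind (B x f) (∏ e, wt p (f e)) :=
        Finset.sum_le_sum fun f _ => step f
    _ = ∑ x ∈ s, cfgSum p (B x) := Finset.sum_comm

lemma cfgSum_cyl (p : ℝ) (g₀ : J → Bool) (U : Finset J) :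
    cfgSum p (fun f => ∀ e ∈ U, f e = g₀ e) = ∏ e ∈ U, wt p (g₀ e) := by
  classical
  set σ := (Equiv.piEquivPiSubtypeProd (· ∈ U) (fun _ : J => Bool)) with hσ
  have key : ∀ (g : ∀ _ : {x // x ∈ U}, Bool) (h : ∀ _ : {x // ¬ x ∈ U}, Bool),
      ind (∀ e ∈ U, σ.symm (g, h) e = g₀ e) (∏ e, wt p (σ.symm (g, h) e)) =
        ind (g = (fun e => g₀ e.1)) (∏ e : {x // x ∈ U}, wt p (g e)) *
          ∏ e : {x // ¬ x ∈ U}, wt p (h e) := by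
    intro g h
    have hval : ∀ e : J, ∀ he : e ∈ U, σ.symm (g, h) e = g ⟨e, he⟩ := by
      intro e he
      simp [hσ, Equiv.piEquivPiSubtypeProd, he]
    have hval' : ∀ e : J, ∀ he : ¬ e ∈ U, σ.symm (g, h) e = h ⟨e, he⟩ := by
      intro e he
      simp [hσ, Equiv.piEquivPiSubtypeProd, he]
    have hcond : (∀ e ∈ U, σ.symm (g, h) e = g₀ e) ↔ g = (fun e => g₀ e.1) := by
      constructor
      · intro hc; funext e; rw [← hval e.1 e.2]; exact hc e.1 e.2
      · intro hc e he; rw [hval e he, hc]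
    have hprod : ∏ e : J, wt p (σ.symm (g, h) e) =
        (∏ e : {x // x ∈ U}, wt p (g e)) * ∏ e : {x // ¬ x ∈ U}, wt p (h e) := by
      rw [← Fintype.prod_subtype_mul_prod_subtype (· ∈ U) (fun e => wt p (σ.symm (g,h) e))]
      congr 1
      · refine Finset.prod_congr ?_ fun e _ => by rw [hval e.1 e.2]
        congr 1
        try exact Subsingleton.elim _ _
      · refine Finset.prod_congr ?_ fun e _ => by rw [hval' e.1 e.2]
        congr 1
        try exact Subsingleton.elim _ _
    by_cases hc : (∀ e ∈ U, σ.symm (g, h) e = g₀ e)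
    · rw [ind_pos hc, ind_pos (hcond.mp hc), hprod]
    · rw [ind_neg hc, ind_neg (fun hgg => hc (hcond.mpr hgg)), zero_mul]
  have hre : cfgSum p (fun f => ∀ e ∈ U, f e = g₀ e) =
      ∑ g : (∀ _ : {x // x ∈ U}, Bool), ∑ h : (∀ _ : {x // ¬ x ∈ U}, Bool),
        ind (∀ e ∈ U, σ.symm (g, h) e = g₀ e) (∏ e, wt p (σ.symm (g, h) e)) := by
    unfold cfgSum
    rw [← Equiv.sum_comp σ.symm
      (fun f => ind (∀ e ∈ U, f e = g₀ e) (∏ e, wt p (f e))), Fintype.sum_prod_type]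
  rw [hre]
  calc ∑ g : (∀ _ : {x // x ∈ U}, Bool), ∑ h : (∀ _ : {x // ¬ x ∈ U}, Bool),
        ind (∀ e ∈ U, σ.symm (g, h) e = g₀ e) (∏ e, wt p (σ.symm (g, h) e))
      = ∑ g : (∀ _ : {x // x ∈ U}, Bool),
          ind (g = (fun e => g₀ e.1)) (∏ e : {x // x ∈ U}, wt p (g e)) *
            ∑ h : (∀ _ : {x // ¬ x ∈ U}, Bool), ∏ e : {x // ¬ x ∈ U}, wt p (h e) := by
        refine Finset.sum_congr rfl fun g _ => ?_
        rw [Finset.mul_sum]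
        exact Finset.sum_congr rfl fun h _ => key g h
    _ = ∑ g : (∀ _ : {x // x ∈ U}, Bool),
          ind (g = (fun e => g₀ e.1)) (∏ e : {x // x ∈ U}, wt p (g e)) := by
        rw [sum_prod_wt p]
        simp
    _ = ∏ e : {x // x ∈ U}, wt p (g₀ e.1) := by
        rw [show ∀ gg : (∀ _ : {x // x ∈ U}, Bool) → ℝ,
            (∑ g : (∀ _ : {x // x ∈ U}, Bool), ind (g = (fun e => g₀ e.1)) (gg g)) =
            ∑ g : (∀ _ : {x // x ∈ U}, Bool),
              if g = (fun e => g₀ e.1) then gg g else 0 from fun gg =>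
          Finset.sum_congr rfl fun g _ => by
            by_cases hg : g = (fun e => g₀ e.1)
            · rw [ind_pos hg, if_pos hg]
            · rw [ind_neg hg, if_neg hg]]
        rw [Finset.sum_ite_eq' Finset.univ (fun e : {x // x ∈ U} => g₀ e.1)
          (fun g => ∏ e : {x // x ∈ U}, wt p (g e))]
        simp
    _ = ∏ e ∈ U, wt p (g₀ e) := by
        rw [Finset.prod_subtype U (fun x => Iff.rfl) (fun e => wt p (g₀ e))]
end Cyl


section MoreCfg
variable {J : Type*} [Fintype J] [DecidableEq J]

lemma cfgSum_congr {p : ℝ} {A B : (J → Bool) → Prop} (h : ∀ f, A f ↔ B f) :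
    cfgSum p A = cfgSum p B :=
  Finset.sum_congr rfl fun f _ => ind_congr (h f) _

lemma cfgSum_compl (p : ℝ) (A : (J → Bool) → Prop) :
    cfgSum p A + cfgSum p (fun f => ¬ A f) = 1 := by
  unfold cfgSum
  rw [← Finset.sum_add_distrib]
  have hterm : ∀ f : J → Bool, ind (A f) (∏ e, wt p (f e)) +
      ind (¬ A f) (∏ e, wt p (f e)) = ∏ e, wt p (f e) := by
    intro f
    by_cases h : A f
    · rw [ind_pos h, ind_neg (fun hh => hh h), add_zero]
    · rw [ind_neg h, ind_pos h, zero_add]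
  rw [Finset.sum_congr rfl fun f _ => hterm f]
  exact sum_prod_wt p

end MoreCfg

abbrev EdgeIdx (n : ℕ) := {e : Sym2 (Fin n) // ¬ e.IsDiag}

noncomputable def clsB (Q : Prop) : Bool := open Classical in if Q then true else false
lemma clsB_iff {Q : Prop} : clsB Q = true ↔ Q := by
  unfold clsB; split <;> simp [*]

noncomputable def gEquiv (n : ℕ) : SimpleGraph (Fin n) ≃ (EdgeIdx n → Bool) where
  toFun G e := clsB (e.1 ∈ G.edgeSet)
  invFun f := SimpleGraph.fromEdgeSet {e | ∃ h : ¬ e.IsDiag, f ⟨e, h⟩ = true}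
  left_inv G := by
    ext v w
    rw [SimpleGraph.fromEdgeSet_adj]
    constructor
    · rintro ⟨⟨h, hf⟩, hne⟩
      exact (SimpleGraph.mem_edgeSet G).mp (clsB_iff.mp hf)
    · intro h
      refine ⟨⟨?_, clsB_iff.mpr ((SimpleGraph.mem_edgeSet G).mpr h)⟩, G.ne_of_adj h⟩
      simp only [Sym2.mk_isDiag_iff]
      exact G.ne_of_adj h
  right_inv f := by
    funext e
    obtain ⟨e, he⟩ := e
    have hmem : e ∈ (SimpleGraph.fromEdgeSet
        {e : Sym2 (Fin n) | ∃ h : ¬ e.IsDiag, f ⟨e, h⟩ = true}).edgeSet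
        ↔ f ⟨e, he⟩ = true := by
      rw [SimpleGraph.edgeSet_fromEdgeSet]
      constructor
      · rintro ⟨⟨h', hf⟩, _⟩
        exact hf
      · intro hf
        exact ⟨⟨he, hf⟩, he⟩
    have : clsB (e ∈ (SimpleGraph.fromEdgeSet
        {e : Sym2 (Fin n) | ∃ h : ¬ e.IsDiag, f ⟨e, h⟩ = true}).edgeSet) = true
        ↔ f ⟨e, he⟩ = true := clsB_iff.trans hmem
    exact Bool.coe_iff_coe.mp this

lemma gEquiv_apply (n : ℕ) (G : SimpleGraph (Fin n)) (e : EdgeIdx n) :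
    gEquiv n G e = clsB (e.1 ∈ G.edgeSet) := rfl

lemma gEquiv_weight (n : ℕ) (p : ℝ) (G : SimpleGraph (Fin n)) :
    p ^ (Nat.card G.edgeSet) * (1 - p) ^ (n.choose 2 - Nat.card G.edgeSet) =
      ∏ e, wt p (gEquiv n G e) := by
  classical
  set f := gEquiv n G with hf
  have hcard : Nat.card G.edgeSet = (univ.filter (fun e : EdgeIdx n => f e = true)).card := by
    have hE : G.edgeSet ≃ {e : EdgeIdx n // f e = true} :=
      { toFun := fun x => ⟨⟨x.1, G.not_isDiag_of_mem_edgeSet x.2⟩, clsB_iff.mpr x.2⟩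
        invFun := fun y => ⟨y.1.1, clsB_iff.mp y.2⟩
        left_inv := fun x => rfl
        right_inv := fun y => rfl }
    rw [Nat.card_eq_of_bijective _ hE.bijective, Nat.card_eq_fintype_card,
      Fintype.card_subtype]
  have hsplit := Finset.prod_filter_mul_prod_filter_not univ
    (fun e : EdgeIdx n => f e = true) (fun e => wt p (f e))
  have h1 : ∏ e ∈ univ.filter (fun e : EdgeIdx n => f e = true), wt p (f e) =
      p ^ (univ.filter (fun e : EdgeIdx n => f e = true)).card := by
    rw [Finset.prod_congr rfl (fun e hee => ?_), Finset.prod_const]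
    rw [(Finset.mem_filter.mp hee).2]
    rfl
  have h2 : ∏ e ∈ univ.filter (fun e : EdgeIdx n => ¬ f e = true), wt p (f e) =
      (1 - p) ^ (univ.filter (fun e : EdgeIdx n => ¬ f e = true)).card := by
    rw [Finset.prod_congr rfl (fun e hee => ?_), Finset.prod_const]
    have h3 := (Finset.mem_filter.mp hee).2
    rw [Bool.not_eq_true] at h3
    rw [h3]
    rfl
  have hcc : (univ.filter (fun e : EdgeIdx n => ¬ f e = true)).card =
      n.choose 2 - (univ.filter (fun e : EdgeIdx n => f e = true)).card := by
    have := Finset.card_filter_add_card_filter_not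
      (s := univ) (p := fun e : EdgeIdx n => f e = true)
    have hcu : (univ : Finset (EdgeIdx n)).card = n.choose 2 := by
      rw [Finset.card_univ]
      convert Sym2.card_subtype_not_diag
      · exact (Fintype.card_fin n).symm
    omega
  rw [hcard, ← hsplit, h1, h2, hcc]

lemma graphProb_eq_cfgSum (n : ℕ) (p : ℝ) (A : SimpleGraph (Fin n) → Prop) :
    graphProb n p A = cfgSum p (fun f => A ((gEquiv n).symm f)) := by
  unfold graphProb
  classical
  have h1 : ∀ G, (if A G then p ^ (Nat.card G.edgeSet) *
      (1 - p) ^ (n.choose 2 - Nat.card G.edgeSet) else 0) =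
      ind (A G) (∏ e, wt p (gEquiv n G e)) := by
    intro G
    rw [← gEquiv_weight n p G]
    by_cases h : A G
    · rw [if_pos h, ind_pos h]
    · rw [if_neg h, ind_neg h]
  rw [Finset.sum_congr rfl (fun G _ => h1 G),
    ← Equiv.sum_comp (gEquiv n).symm (fun G => ind (A G) (∏ e, wt p (gEquiv n G e)))]
  unfold cfgSum
  refine Finset.sum_congr rfl fun f _ => ?_
  beta_reduce
  rw [Equiv.apply_symm_apply]

lemma adj_symm_iff (n : ℕ) (f : EdgeIdx n → Bool) {v w : Fin n} (hvw : v ≠ w) :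
    ((gEquiv n).symm f).Adj v w ↔ f ⟨s(v, w), by simp [Sym2.mk_isDiag_iff, hvw]⟩ = true := by
  set G := (gEquiv n).symm f with hG
  have : gEquiv n G = f := by rw [hG, Equiv.apply_symm_apply]
  rw [← this, gEquiv_apply, clsB_iff]
  exact (SimpleGraph.mem_edgeSet G).symm

noncomputable def epairs (n : ℕ) (A B : Finset (Fin n)) : Finset (EdgeIdx n) :=
  Finset.subtype _ ((A ×ˢ B).image (fun q => s(q.1, q.2)))

lemma mem_epairs {n : ℕ} {A B : Finset (Fin n)} {e : EdgeIdx n} :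
    e ∈ epairs n A B ↔ ∃ a ∈ A, ∃ b ∈ B, s(a, b) = e.1 := by
  unfold epairs
  rw [Finset.mem_subtype, Finset.mem_image]
  constructor
  · rintro ⟨⟨a, b⟩, hab, he⟩
    obtain ⟨ha, hb⟩ := Finset.mem_product.mp hab
    exact ⟨a, ha, b, hb, he⟩
  · rintro ⟨a, ha, b, hb, he⟩
    exact ⟨(a, b), Finset.mem_product.mpr ⟨ha, hb⟩, he⟩

lemma card_epairs {n : ℕ} {A B : Finset (Fin n)} (hAB : Disjoint A B) :
    (epairs n A B).card = A.card * B.card := by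
  unfold epairs
  rw [Finset.card_subtype]
  have hnd : ∀ x ∈ (A ×ˢ B).image (fun q => s(q.1, q.2)), ¬ x.IsDiag := by
    intro x hx
    obtain ⟨⟨a, b⟩, hab, he⟩ := Finset.mem_image.mp hx
    obtain ⟨ha, hb⟩ := Finset.mem_product.mp hab
    rw [← he]
    simp only [Sym2.mk_isDiag_iff]
    exact fun hq => Finset.disjoint_left.mp hAB ha (hq ▸ hb)
  rw [Finset.filter_true_of_mem hnd, Finset.card_image_of_injOn, Finset.card_product]
  rintro ⟨a, b⟩ hab ⟨a', b'⟩ hab' he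
  obtain ⟨ha, hb⟩ := Finset.mem_product.mp (Finset.mem_coe.mp hab)
  obtain ⟨ha', hb'⟩ := Finset.mem_product.mp (Finset.mem_coe.mp hab')
  simp only [Sym2.eq_iff] at he
  rcases he with ⟨h1, h2⟩ | ⟨h1, h2⟩
  · exact Prod.ext h1 h2
  · subst h1
    exact absurd hb' (Finset.disjoint_left.mp hAB ha)

lemma disjoint_epairs {n : ℕ} {A A' B : Finset (Fin n)} (hAA : Disjoint A A')
    (hAB : Disjoint A B) :
    Disjoint (epairs n A B) (epairs n A' B) := by
  rw [Finset.disjoint_left]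
  intro e he he'
  obtain ⟨a, ha, b, hb, hab⟩ := mem_epairs.mp he
  obtain ⟨a', ha', b', hb', hab'⟩ := mem_epairs.mp he'
  rw [← hab'] at hab
  simp only [Sym2.eq_iff] at hab
  rcases hab with ⟨h1, h2⟩ | ⟨h1, h2⟩
  · subst h1
    exact absurd ha' (Finset.disjoint_left.mp hAA ha)
  · subst h1
    exact absurd hb' (Finset.disjoint_left.mp hAB ha)

lemma clsB_pos {Q : Prop} (h : Q) : clsB Q = true := clsB_iff.mpr h
lemma clsB_neg {Q : Prop} (h : ¬ Q) : clsB Q = false := by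
  cases hb : clsB Q
  · rfl
  · exact absurd (clsB_iff.mp hb) h


lemma graphProb_union (n : ℕ) {p : ℝ} (hp0 : 0 ≤ p) (hp1 : p ≤ 1) {ι : Type}
    (s : Finset ι) {A : SimpleGraph (Fin n) → Prop} {B : ι → SimpleGraph (Fin n) → Prop}
    (h : ∀ G, A G → ∃ x ∈ s, B x G) :
    graphProb n p A ≤ ∑ x ∈ s, graphProb n p (B x) := by
  rw [graphProb_eq_cfgSum]
  rw [Finset.sum_congr rfl (fun x _ => graphProb_eq_cfgSum n p (B x))]
  exact cfgSum_union hp0 hp1 s (fun f hf => h _ hf)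

lemma cyl_prob_le (n : ℕ) {p : ℝ} (hp0 : 0 ≤ p) (hp1 : p ≤ 1)
    (X F : Finset (Fin n)) (hFX : F ⊆ X) :
    graphProb n p (fun G => (∀ v ∈ F, ∀ w, w ∉ X → G.Adj v w) ∧
        (∀ v ∈ X \ F, ∀ w, w ∉ X → ¬ G.Adj v w)) ≤
      (p ^ (n - X.card)) ^ F.card * ((1 - p) ^ (n - X.card)) ^ (X.card - F.card) := by
  classical
  set Y := Xᶜ with hY
  set S := epairs n F Y with hS
  set T := epairs n (X \ F) Y with hT
  have hFY : Disjoint F Y := Disjoint.mono_left hFX disjoint_compl_right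
  have hEY : Disjoint (X \ F) Y := Disjoint.mono_left Finset.sdiff_subset disjoint_compl_right
  have hFE : Disjoint F (X \ F) := Finset.disjoint_sdiff
  have hST : Disjoint S T := disjoint_epairs hFE hFY
  set g₀ : EdgeIdx n → Bool := fun e => clsB (e ∈ S) with hg₀
  have hmemY : ∀ w : Fin n, w ∈ Y ↔ w ∉ X := fun w => Finset.mem_compl
  rw [graphProb_eq_cfgSum]
  have hevent : ∀ f : EdgeIdx n → Bool,
      ((∀ v ∈ F, ∀ w, w ∉ X → ((gEquiv n).symm f).Adj v w) ∧
        (∀ v ∈ X \ F, ∀ w, w ∉ X → ¬ ((gEquiv n).symm f).Adj v w)) ↔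
      (∀ e ∈ S ∪ T, f e = g₀ e) := by
    intro f
    constructor
    · rintro ⟨h1, h2⟩ e he
      rcases Finset.mem_union.mp he with heS | heT
      · obtain ⟨a, ha, b, hb, hab⟩ := mem_epairs.mp heS
        have hbX : b ∉ X := (hmemY b).mp hb
        have hne : a ≠ b := fun hq => hbX (hq ▸ hFX ha)
        have hadj := h1 a ha b hbX
        have hfe : f ⟨s(a, b), by simp [Sym2.mk_isDiag_iff, hne]⟩ = true :=
          (adj_symm_iff n f hne).mp hadj
        have heq : e = ⟨s(a, b), by simp [Sym2.mk_isDiag_iff, hne]⟩ := Subtype.ext hab.symm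
        rw [heq, hfe]
        simp only [hg₀]
        rw [clsB_pos (heq ▸ heS)]
      · obtain ⟨a, ha, b, hb, hab⟩ := mem_epairs.mp heT
        have hbX : b ∉ X := (hmemY b).mp hb
        have haX : a ∈ X := Finset.sdiff_subset ha
        have hne : a ≠ b := fun hq => hbX (hq ▸ haX)
        have hnadj := h2 a ha b hbX
        have hfe : f ⟨s(a, b), by simp [Sym2.mk_isDiag_iff, hne]⟩ = false := by
          cases hc : f ⟨s(a, b), by simp [Sym2.mk_isDiag_iff, hne]⟩
          · rfl
          · exact absurd ((adj_symm_iff n f hne).mpr hc) hnadj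
        have heq : e = ⟨s(a, b), by simp [Sym2.mk_isDiag_iff, hne]⟩ := Subtype.ext hab.symm
        have heS : e ∉ S := Finset.disjoint_right.mp hST heT
        rw [heq, hfe]
        simp only [hg₀]
        rw [clsB_neg (heq ▸ heS)]
    · intro h
      constructor
      · intro v hv w hw
        have hne : v ≠ w := fun hq => hw (hq ▸ hFX hv)
        have heS : (⟨s(v, w), by simp [Sym2.mk_isDiag_iff, hne]⟩ : EdgeIdx n) ∈ S :=
          mem_epairs.mpr ⟨v, hv, w, (hmemY w).mpr hw, rfl⟩
        have hfe := h _ (Finset.mem_union_left _ heS)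
        simp only [hg₀] at hfe
        rw [clsB_pos heS] at hfe
        exact (adj_symm_iff n f hne).mpr hfe
      · intro v hv w hw
        have hvX : v ∈ X := Finset.sdiff_subset hv
        have hne : v ≠ w := fun hq => hw (hq ▸ hvX)
        have heT : (⟨s(v, w), by simp [Sym2.mk_isDiag_iff, hne]⟩ : EdgeIdx n) ∈ T :=
          mem_epairs.mpr ⟨v, hv, w, (hmemY w).mpr hw, rfl⟩
        have heS : (⟨s(v, w), by simp [Sym2.mk_isDiag_iff, hne]⟩ : EdgeIdx n) ∉ S :=
          Finset.disjoint_right.mp hST heT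
        have hfe := h _ (Finset.mem_union_right _ heT)
        simp only [hg₀] at hfe
        rw [clsB_neg heS] at hfe
        intro hadj
        rw [(adj_symm_iff n f hne).mp hadj] at hfe
        exact absurd hfe (by simp)
  refine le_of_eq ?_
  rw [cfgSum_congr hevent, cfgSum_cyl p g₀ (S ∪ T), Finset.prod_union hST]
  have hSc : ∏ e ∈ S, wt p (g₀ e) = p ^ S.card := by
    rw [Finset.prod_congr rfl (fun e heS => ?_), Finset.prod_const]
    simp only [hg₀]
    rw [clsB_pos heS]
    simp [wt]
  have hTc : ∏ e ∈ T, wt p (g₀ e) = (1 - p) ^ T.card := by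
    rw [Finset.prod_congr rfl (fun e heT => ?_), Finset.prod_const]
    simp only [hg₀]
    rw [clsB_neg (Finset.disjoint_right.mp hST heT)]
    simp [wt]
  rw [hSc, hTc, hS, hT, card_epairs hFY, card_epairs hEY, hY, Finset.card_compl,
    Fintype.card_fin, Finset.card_sdiff_of_subset hFX, pow_mul, pow_mul]
  ring

lemma prob_bad_le (n : ℕ) {p : ℝ} (hp0 : 0 ≤ p) (hp1 : p ≤ 1) :
    graphProb n p (fun G => ¬ hasOutsideCommon n G) ≤
      ∑ k ∈ Finset.Icc 2 (n - 2),
        (n.choose k : ℝ) * (p ^ (n - k) + (1 - p) ^ (n - k)) ^ k := by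
  classical
  set 𝒳 := Finset.univ.filter
    (fun X : Finset (Fin n) => 2 ≤ X.card ∧ X.card ≤ n - 2) with h𝒳
  have step1 : graphProb n p (fun G => ¬ hasOutsideCommon n G) ≤
      ∑ X ∈ 𝒳, graphProb n p (fun G => ∀ v ∈ X,
        (∀ w, w ∉ X → G.Adj v w) ∨ (∀ w, w ∉ X → ¬ G.Adj v w)) := by
    refine graphProb_union n hp0 hp1 𝒳 (fun G hG => ?_)
    unfold hasOutsideCommon at hG
    push_neg at hG
    obtain ⟨X, h2, hn2, hX⟩ := hG
    refine ⟨X, Finset.mem_filter.mpr ⟨Finset.mem_univ _, h2, hn2⟩, fun v hv => ?_⟩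
    by_cases hex : ∃ w, w ∉ X ∧ G.Adj v w
    · left
      obtain ⟨w₀, hw₀, hadj₀⟩ := hex
      intro w hw
      exact hX v hv ⟨w₀, hw₀, hadj₀⟩ w hw
    · right
      intro w hw hadj
      exact hex ⟨w, hw, hadj⟩
  have step2 : ∀ X ∈ 𝒳, graphProb n p (fun G => ∀ v ∈ X,
      (∀ w, w ∉ X → G.Adj v w) ∨ (∀ w, w ∉ X → ¬ G.Adj v w)) ≤
      (p ^ (n - X.card) + (1 - p) ^ (n - X.card)) ^ X.card := by
    intro X _
    have hu : graphProb n p (fun G => ∀ v ∈ X,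
        (∀ w, w ∉ X → G.Adj v w) ∨ (∀ w, w ∉ X → ¬ G.Adj v w)) ≤
        ∑ F ∈ X.powerset, graphProb n p (fun G => (∀ v ∈ F, ∀ w, w ∉ X → G.Adj v w) ∧
          (∀ v ∈ X \ F, ∀ w, w ∉ X → ¬ G.Adj v w)) := by
      refine graphProb_union n hp0 hp1 _ (fun G hG => ?_)
      classical
      refine ⟨X.filter (fun v => ∀ w, w ∉ X → G.Adj v w),
        Finset.mem_powerset.mpr (Finset.filter_subset _ _), ?_, ?_⟩
      · intro v hv
        exact (Finset.mem_filter.mp hv).2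
      · intro v hv w hw hadj
        have hvX := (Finset.mem_sdiff.mp hv).1
        have hvF := (Finset.mem_sdiff.mp hv).2
        rcases hG v hvX with h | h
        · exact hvF (Finset.mem_filter.mpr ⟨hvX, h⟩)
        · exact h w hw hadj
    refine le_trans hu ?_
    have hcyl : ∀ F ∈ X.powerset,
        graphProb n p (fun G => (∀ v ∈ F, ∀ w, w ∉ X → G.Adj v w) ∧
          (∀ v ∈ X \ F, ∀ w, w ∉ X → ¬ G.Adj v w)) ≤
        (p ^ (n - X.card)) ^ F.card * ((1 - p) ^ (n - X.card)) ^ (X.card - F.card) :=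
      fun F hF => cyl_prob_le n hp0 hp1 X F (Finset.mem_powerset.mp hF)
    refine le_trans (Finset.sum_le_sum hcyl) (le_of_eq ?_)
    have hb := Finset.prod_add (fun _ : Fin n => p ^ (n - X.card))
      (fun _ : Fin n => (1 - p) ^ (n - X.card)) X
    rw [Finset.prod_const] at hb
    rw [hb]
    refine (Finset.sum_congr rfl fun F hF => ?_).symm
    rw [Finset.prod_const, Finset.prod_const,
      Finset.card_sdiff_of_subset (Finset.mem_powerset.mp hF)]
  refine le_trans (le_trans step1 (Finset.sum_le_sum step2)) (le_of_eq ?_)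
  have hpart : 𝒳 = (Finset.Icc 2 (n - 2)).biUnion
      (fun k => Finset.powersetCard k Finset.univ) := by
    ext X
    simp only [h𝒳, Finset.mem_filter, Finset.mem_univ, true_and, Finset.mem_biUnion,
      Finset.mem_Icc, Finset.mem_powersetCard, Finset.subset_univ]
    constructor
    · rintro ⟨h1, h2⟩
      exact ⟨X.card, ⟨h1, h2⟩, rfl⟩
    · rintro ⟨k, ⟨h1, h2⟩, rfl⟩
      exact ⟨h1, h2⟩
  rw [hpart, Finset.sum_biUnion (fun i _ j _ hij =>
    Finset.univ.pairwise_disjoint_powersetCard hij)]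
  refine Finset.sum_congr rfl fun k _ => ?_
  rw [Finset.sum_congr rfl (fun X hX => by
    rw [(Finset.mem_powersetCard.mp hX).2]), Finset.sum_const,
    Finset.card_powersetCard, Finset.card_univ, Fintype.card_fin, nsmul_eq_mul]


lemma graphProb_nonneg (n : ℕ) {p : ℝ} (hp0 : 0 ≤ p) (hp1 : p ≤ 1)
    (A : SimpleGraph (Fin n) → Prop) : 0 ≤ graphProb n p A := by
  rw [graphProb_eq_cfgSum]
  exact cfgSum_nonneg hp0 hp1 _

lemma graphProb_compl (n : ℕ) (p : ℝ) (A : SimpleGraph (Fin n) → Prop) :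
    graphProb n p A + graphProb n p (fun G => ¬ A G) = 1 := by
  rw [graphProb_eq_cfgSum, graphProb_eq_cfgSum]
  exact cfgSum_compl p _

lemma base_le {p : ℝ} (hp0 : 0 ≤ p) (hp2 : p ≤ 1/2) {m : ℕ} (hm : 2 ≤ m) :
    p ^ m + (1 - p) ^ m ≤ (1 - p) ^ (m - 1) := by
  obtain ⟨j, rfl⟩ : ∃ j, m = j + 2 := ⟨m - 2, by omega⟩
  have h1p : (0:ℝ) ≤ 1 - p := by linarith
  have hple : p ≤ 1 - p := by linarith
  have hpj : p ^ j ≤ (1 - p) ^ j := pow_le_pow_left₀ hp0 hple j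
  have e1 : p ^ (j + 2) ≤ p ^ 2 * (1 - p) ^ j := by
    calc p ^ (j + 2) = p ^ j * p ^ 2 := by ring
      _ ≤ (1 - p) ^ j * p ^ 2 := by
          exact mul_le_mul_of_nonneg_right hpj (by positivity)
      _ = p ^ 2 * (1 - p) ^ j := by ring
  have e3 : p ^ 2 + (1 - p) ^ 2 ≤ 1 - p := by nlinarith
  have hnn : (0:ℝ) ≤ (1 - p) ^ j := pow_nonneg h1p j
  show p ^ (j + 2) + (1 - p) ^ (j + 2) ≤ (1 - p) ^ (j + 2 - 1)
  have : j + 2 - 1 = j + 1 := rfl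
  rw [this]
  calc p ^ (j + 2) + (1 - p) ^ (j + 2) ≤ (p ^ 2 + (1 - p) ^ 2) * (1 - p) ^ j := by
        have e2 : (1 - p) ^ (j + 2) = (1 - p) ^ 2 * (1 - p) ^ j := by ring
        rw [e2]
        nlinarith [e1]
    _ ≤ (1 - p) * (1 - p) ^ j := mul_le_mul_of_nonneg_right e3 hnn
    _ = (1 - p) ^ (j + 1) := by ring

lemma pow_one_sub_le_exp {p : ℝ} (hp1 : p ≤ 1) (j : ℕ) :
    (1 - p) ^ j ≤ Real.exp (-(p * j)) := by
  have h1 : 1 - p ≤ Real.exp (-p) := by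
    have := Real.add_one_le_exp (-p)
    linarith
  have h1p : (0:ℝ) ≤ 1 - p := by linarith
  calc (1 - p) ^ j ≤ Real.exp (-p) ^ j := pow_le_pow_left₀ h1p h1 j
    _ = Real.exp (-(p * j)) := by
        rw [← Real.exp_nat_mul]
        ring_nf

lemma nat_claim {n k : ℕ} (hn : 6 ≤ n) (hk2 : 2 ≤ k) (hkn : k ≤ n - 2) :
    ((min k (n - k) : ℕ) : ℝ) * ((n : ℝ) - 6) / 4 + (n : ℝ) / 2 + 1 ≤
      ((n : ℝ) - (k : ℝ) - 1) * k := by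
  have hkn' : k + 2 ≤ n := by omega
  have hcast : ((n - k : ℕ) : ℝ) = (n : ℝ) - k := by
    rw [Nat.cast_sub (by omega)]
  have hk2' : (2:ℝ) ≤ (k:ℝ) := by exact_mod_cast hk2
  have hkn'' : (k:ℝ) + 2 ≤ (n:ℝ) := by exact_mod_cast hkn'
  rcases le_total k (n - k) with h | h
  · rw [min_eq_left h]
    have h' : 2 * (k:ℝ) ≤ n := by
      have h2 : 2 * k ≤ n := by omega
      exact_mod_cast h2
    nlinarith [mul_nonneg (by linarith : (0:ℝ) ≤ (k:ℝ) - 2)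
      (by nlinarith : (0:ℝ) ≤ 3 * (n:ℝ) - 4 * k + 2)]
  · rw [min_eq_right h, hcast]
    have h' : 2 * ((n:ℝ) - k) ≤ n := by
      have h2 : n ≤ 2 * k := by omega
      have : (n:ℝ) ≤ 2 * k := by exact_mod_cast h2
      linarith
    have hm2 : (2:ℝ) ≤ (n:ℝ) - k := by
      have : 2 ≤ n - k := by omega
      calc (2:ℝ) ≤ ((n - k : ℕ) : ℝ) := by exact_mod_cast this
        _ = (n:ℝ) - k := hcast
    nlinarith [mul_nonneg (by linarith : (0:ℝ) ≤ ((n:ℝ) - k) - 2)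
      (by nlinarith : (0:ℝ) ≤ 3 * (n:ℝ) - 4 * ((n:ℝ) - k) + 2)]

lemma choose_le_pow_min (n k : ℕ) (hkn : k ≤ n) :
    (n.choose k : ℝ) ≤ (n : ℝ) ^ ((min k (n - k) : ℕ)) := by
  rcases le_total k (n - k) with h | h
  · rw [min_eq_left h]
    exact_mod_cast Nat.cast_le.mpr (Nat.choose_le_pow n k)
  · rw [min_eq_right h]
    have hsymm : n.choose k = n.choose (n - k) := (Nat.choose_symm hkn).symm
    rw [hsymm]
    exact_mod_cast Nat.cast_le.mpr (Nat.choose_le_pow n (n - k))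

lemma term_le {n k : ℕ} {p : ℝ} (hn : 6 ≤ n) (hk2 : 2 ≤ k) (hkn : k ≤ n - 2)
    (hp0 : 0 ≤ p) (hp2 : p ≤ 1/2)
    (hcond : Real.log n ≤ p * ((n:ℝ) - 6) / 4) :
    (n.choose k : ℝ) * (p ^ (n - k) + (1 - p) ^ (n - k)) ^ k ≤
      Real.exp (-(p * (((n / 2 : ℕ) : ℝ) + 1))) := by
  have hp1 : p ≤ 1 := by linarith
  have h1p : (0:ℝ) ≤ 1 - p := by linarith
  have hm2 : 2 ≤ n - k := by omega
  have hbase : p ^ (n - k) + (1 - p) ^ (n - k) ≤ (1 - p) ^ (n - k - 1) :=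
    base_le hp0 hp2 hm2
  have hbase0 : 0 ≤ p ^ (n - k) + (1 - p) ^ (n - k) := by positivity
  have h2 : (p ^ (n - k) + (1 - p) ^ (n - k)) ^ k ≤ (1 - p) ^ ((n - k - 1) * k) := by
    rw [pow_mul]
    exact pow_le_pow_left₀ hbase0 hbase k
  have h4 : (1 - p) ^ ((n - k - 1) * k) ≤ Real.exp (-(p * (((n - k - 1) * k : ℕ) : ℝ))) :=
    pow_one_sub_le_exp hp1 _
  have hchoose : (n.choose k : ℝ) ≤ (n:ℝ) ^ ((min k (n - k) : ℕ)) :=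
    choose_le_pow_min n k (by omega)
  have hnpos : (0:ℝ) < n := by
    have : (6:ℝ) ≤ n := by exact_mod_cast hn
    linarith
  have hnexp : (n:ℝ) ^ ((min k (n - k) : ℕ)) =
      Real.exp (((min k (n - k) : ℕ) : ℝ) * Real.log n) := by
    rw [Real.exp_nat_mul, Real.exp_log hnpos]
  have hcast1 : (((n - k - 1) * k : ℕ) : ℝ) = ((n:ℝ) - k - 1) * k := by
    rw [Nat.cast_mul]
    congr 1
    have h1 : n - k - 1 = n - (k + 1) := by omega
    rw [h1, Nat.cast_sub (by omega)]
    push_cast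
    ring
  have hh2 : (((n / 2 : ℕ)) : ℝ) ≤ (n:ℝ) / 2 := by
    have := Nat.cast_div_le (α := ℝ) (m := n) (n := 2)
    simpa using this
  have ht0 : (0:ℝ) ≤ ((min k (n - k) : ℕ) : ℝ) := by positivity
  have hlog0 : 0 ≤ Real.log n := Real.log_nonneg (by exact_mod_cast Nat.one_le_iff_ne_zero.mpr (by omega))
  have e5 : ((min k (n - k) : ℕ) : ℝ) * Real.log n ≤
      ((min k (n - k) : ℕ) : ℝ) * (p * ((n:ℝ) - 6) / 4) :=
    mul_le_mul_of_nonneg_left hcond ht0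
  have e6 := nat_claim hn hk2 hkn
  have e6p := mul_le_mul_of_nonneg_left e6 hp0
  have e7 := mul_le_mul_of_nonneg_left hh2 hp0
  have key : ((min k (n - k) : ℕ) : ℝ) * Real.log n - p * ((((n - k - 1) * k : ℕ)) : ℝ) ≤
      -(p * (((n / 2 : ℕ) : ℝ) + 1)) := by
    rw [hcast1]
    nlinarith [e5, e6p, e7]
  calc (n.choose k : ℝ) * (p ^ (n - k) + (1 - p) ^ (n - k)) ^ k
      ≤ Real.exp (((min k (n - k) : ℕ) : ℝ) * Real.log n) *
          Real.exp (-(p * (((n - k - 1) * k : ℕ) : ℝ))) := by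
        refine mul_le_mul (hnexp ▸ hchoose) (le_trans h2 h4) (by positivity) (by positivity)
    _ = Real.exp (((min k (n - k) : ℕ) : ℝ) * Real.log n - p * ((((n - k - 1) * k : ℕ)) : ℝ)) := by
        rw [← Real.exp_add]
        ring_nf
    _ ≤ Real.exp (-(p * (((n / 2 : ℕ) : ℝ) + 1))) := Real.exp_le_exp.mpr key

lemma sum_term_le (n : ℕ) {p : ℝ} (hn : 6 ≤ n) (hp0 : 0 ≤ p) (hp2 : p ≤ 1/2)
    (hcond : Real.log n ≤ p * ((n:ℝ) - 6) / 4) :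
    ∑ k ∈ Finset.Icc 2 (n - 2),
        (n.choose k : ℝ) * (p ^ (n - k) + (1 - p) ^ (n - k)) ^ k ≤
      (n : ℝ) * Real.exp (-(p * (((n / 2 : ℕ) : ℝ) + 1))) := by
  calc ∑ k ∈ Finset.Icc 2 (n - 2),
        (n.choose k : ℝ) * (p ^ (n - k) + (1 - p) ^ (n - k)) ^ k
      ≤ ∑ _k ∈ Finset.Icc 2 (n - 2), Real.exp (-(p * (((n / 2 : ℕ) : ℝ) + 1))) := by
        refine Finset.sum_le_sum fun k hk => ?_
        obtain ⟨hk2, hkn⟩ := Finset.mem_Icc.mp hk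
        exact term_le hn hk2 hkn hp0 hp2 hcond
    _ = ((Finset.Icc 2 (n - 2)).card : ℝ) * Real.exp (-(p * (((n / 2 : ℕ) : ℝ) + 1))) := by
        rw [Finset.sum_const, nsmul_eq_mul]
    _ ≤ (n : ℝ) * Real.exp (-(p * (((n / 2 : ℕ) : ℝ) + 1))) := by
        refine mul_le_mul_of_nonneg_right ?_ (Real.exp_nonneg _)
        rw [Nat.card_Icc]
        have : n - 2 + 1 - 2 ≤ n := by omega
        exact_mod_cast this

lemma eventual_conds (α : ℝ) (h0 : 0 < α) (h1 : α < 1) :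
    ∀ᶠ n : ℕ in atTop, 12 ≤ n ∧ (n:ℝ) ^ (-α) ≤ 1/2 ∧
      Real.log n ≤ (n:ℝ) ^ (-α) * ((n:ℝ) - 6) / 4 ∧
      (n:ℝ) * Real.exp (-((n:ℝ) ^ (-α) * (((n / 2 : ℕ) : ℝ) + 1))) ≤ 1 / n := by
  have F1 : ∀ᶠ n : ℕ in atTop, 12 ≤ n := eventually_ge_atTop 12
  have F2 : Tendsto (fun n : ℕ => (n:ℝ) ^ (-α)) atTop (nhds 0) :=
    (tendsto_rpow_neg_atTop h0).comp tendsto_natCast_atTop_atTop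
  have F2' : ∀ᶠ n : ℕ in atTop, (n:ℝ) ^ (-α) < 1/2 :=
    F2.eventually (gt_mem_nhds (by norm_num))
  have F3r : ∀ᶠ x : ℝ in atTop, ‖Real.log x‖ ≤ 1/16 * ‖x ^ (1 - α)‖ :=
    (isLittleO_log_rpow_atTop (by linarith)).def (by norm_num)
  have F3 : ∀ᶠ n : ℕ in atTop, ‖Real.log n‖ ≤ 1/16 * ‖(n:ℝ) ^ (1 - α)‖ :=
    tendsto_natCast_atTop_atTop.eventually F3r
  filter_upwards [F1, F2', F3] with n h12 hp2 hlogn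
  have np : (0:ℝ) < n := by
    have : (12:ℝ) ≤ n := by exact_mod_cast h12
    linarith
  have hp0 : (0:ℝ) ≤ (n:ℝ) ^ (-α) := Real.rpow_nonneg (le_of_lt np) _
  set p := (n:ℝ) ^ (-α) with hp
  have hrp : p * (n:ℝ) = (n:ℝ) ^ (1 - α) := by
    rw [hp, show (1 - α) = -α + 1 by ring, Real.rpow_add np, Real.rpow_one]
  have hlog : Real.log n ≤ 1/16 * (p * n) := by
    rw [hrp]
    have h1 : ‖Real.log n‖ = Real.log n := by
      rw [Real.norm_eq_abs, abs_of_nonneg (Real.log_nonneg (by exact_mod_cast (by omega : 1 ≤ n)))]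
    have h2 : ‖(n:ℝ) ^ (1 - α)‖ = (n:ℝ) ^ (1 - α) := by
      rw [Real.norm_eq_abs, abs_of_nonneg (Real.rpow_nonneg (le_of_lt np) _)]
    rw [h1, h2] at hlogn
    exact hlogn
  refine ⟨h12, le_of_lt hp2, ?_, ?_⟩
  · -- log n ≤ p (n-6)/4
    have hn12 : (12:ℝ) ≤ n := by exact_mod_cast h12
    nlinarith [mul_nonneg hp0 (by linarith : (0:ℝ) ≤ (n:ℝ) - 6)]
  · -- n e^{-p(h+1)} ≤ 1/n
    have hhalf : (n:ℝ) / 2 ≤ ((n / 2 : ℕ) : ℝ) + 1 := by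
      have h2 : n ≤ 2 * (n / 2) + 1 := by omega
      have : (n:ℝ) ≤ 2 * ((n / 2 : ℕ) : ℝ) + 1 := by exact_mod_cast h2
      linarith
    have hplarge : 2 * Real.log n ≤ p * (((n / 2 : ℕ) : ℝ) + 1) := by
      have e1 : p * ((n:ℝ)/2) ≤ p * (((n / 2 : ℕ) : ℝ) + 1) :=
        mul_le_mul_of_nonneg_left hhalf hp0
      nlinarith [hlog]
    have hexple : Real.exp (-(p * (((n / 2 : ℕ) : ℝ) + 1))) ≤
        Real.exp (-(2 * Real.log n)) := Real.exp_le_exp.mpr (by linarith)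
    have hval : Real.exp (-(2 * Real.log n)) = 1 / (n:ℝ) ^ 2 := by
      rw [show -(2 * Real.log n) = ((2:ℕ):ℝ) * (-Real.log n) by push_cast; ring,
        Real.exp_nat_mul, Real.exp_neg, Real.exp_log np]
      rw [one_div, ← inv_pow]
    calc (n:ℝ) * Real.exp (-(p * (((n / 2 : ℕ) : ℝ) + 1)))
        ≤ (n:ℝ) * Real.exp (-(2 * Real.log n)) :=
          mul_le_mul_of_nonneg_left hexple (le_of_lt np)
      _ = (n:ℝ) * (1 / (n:ℝ) ^ 2) := by rw [hval]
      _ = 1 / n := by field_simp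


end AuxiliaryForAasOutsideCommon

/-- For `0 < α < 1` and `p = n^{-α}`, a.a.s. every subset `X` of the
vertices of `G(n,p)` with `2 ≤ |X| ≤ n-2` contains a vertex with a neighbor and a
non-neighbor outside `X`; moreover the failure probability is eventually at most
`2n e^{-p(⌊n/2⌋+1)} / ((1-p)(1 - n e^{-p(⌊n/2⌋+1)}))`. -/
theorem aas_outside_common (α : ℝ) (h0 : 0 < α) (h1 : α < 1) :
    Tendsto (fun n : ℕ => graphProb n ((n : ℝ) ^ (-α)) (hasOutsideCommon n))
      atTop (nhds 1) ∧
    ∀ᶠ n : ℕ in atTop,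
      graphProb n ((n : ℝ) ^ (-α)) (fun G => ¬ hasOutsideCommon n G) ≤
        2 * n * Real.exp (-(n : ℝ) ^ (-α) * ((n / 2 : ℕ) + 1)) /
          ((1 - (n : ℝ) ^ (-α)) *
            (1 - n * Real.exp (-(n : ℝ) ^ (-α) * ((n / 2 : ℕ) + 1)))) := by
  have hkey : ∀ᶠ n : ℕ in atTop,
      0 ≤ graphProb n ((n:ℝ) ^ (-α)) (fun G => ¬ hasOutsideCommon n G) ∧
      graphProb n ((n:ℝ) ^ (-α)) (fun G => ¬ hasOutsideCommon n G) ≤ 1 / (n:ℝ) ∧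
      graphProb n ((n:ℝ) ^ (-α)) (fun G => ¬ hasOutsideCommon n G) ≤
        2 * n * Real.exp (-(n : ℝ) ^ (-α) * ((n / 2 : ℕ) + 1)) /
          ((1 - (n : ℝ) ^ (-α)) *
            (1 - n * Real.exp (-(n : ℝ) ^ (-α) * ((n / 2 : ℕ) + 1)))) := by
    filter_upwards [eventual_conds α h0 h1] with n hn
    obtain ⟨h12, hp2, hcond, hq⟩ := hn
    have hp0 : (0:ℝ) ≤ (n:ℝ) ^ (-α) := Real.rpow_nonneg (Nat.cast_nonneg n) _
    have hp1 : (n:ℝ) ^ (-α) ≤ 1 := by linarith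
    have hn6 : 6 ≤ n := by omega
    have np : (0:ℝ) < n := by
      have : (12:ℝ) ≤ n := by exact_mod_cast h12
      linarith
    set p := (n:ℝ) ^ (-α) with hp
    set q := (n:ℝ) * Real.exp (-(p * (((n / 2 : ℕ) : ℝ) + 1))) with hqdef
    have hbadle : graphProb n p (fun G => ¬ hasOutsideCommon n G) ≤ q :=
      le_trans (prob_bad_le n hp0 hp1) (sum_term_le n hn6 hp0 hp2 hcond)
    have hq0 : 0 ≤ q := by positivity
    have hbad0 : 0 ≤ graphProb n p (fun G => ¬ hasOutsideCommon n G) :=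
      graphProb_nonneg n hp0 hp1 _
    have hqsmall : q ≤ 1 / (n:ℝ) := hq
    have hqlt1 : q < 1 := by
      have : 1 / (n:ℝ) ≤ 1 / 12 := by
        rw [div_le_div_iff₀ np (by norm_num)]
        have : (12:ℝ) ≤ n := by exact_mod_cast h12
        linarith
      linarith
    refine ⟨hbad0, le_trans hbadle hqsmall, ?_⟩
    have hE : -p * (((n / 2 : ℕ) : ℝ) + 1) = -(p * (((n / 2 : ℕ) : ℝ) + 1)) := neg_mul _ _
    rw [hE]
    have hrw : 2 * (n:ℝ) * Real.exp (-(p * (((n / 2 : ℕ) : ℝ) + 1))) = 2 * q := by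
      rw [hqdef]; ring
    rw [hrw, ← hqdef]
    have hD : (0:ℝ) < (1 - p) * (1 - q) := by
      have : p < 1 := by linarith
      have : (0:ℝ) < 1 - p := by linarith
      have : (0:ℝ) < 1 - q := by linarith
      positivity
    have hDle : (1 - p) * (1 - q) ≤ 1 := by nlinarith
    refine le_trans hbadle ?_
    rw [le_div_iff₀ hD]
    nlinarith
  constructor
  · have hb : Tendsto (fun n : ℕ =>
        graphProb n ((n:ℝ) ^ (-α)) (fun G => ¬ hasOutsideCommon n G)) atTop (nhds 0) :=
      squeeze_zero' (hkey.mono fun n hn => hn.1) (hkey.mono fun n hn => hn.2.1)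
        tendsto_one_div_atTop_nhds_zero_nat
    have hcompl : ∀ n : ℕ, graphProb n ((n:ℝ) ^ (-α)) (hasOutsideCommon n) =
        1 - graphProb n ((n:ℝ) ^ (-α)) (fun G => ¬ hasOutsideCommon n G) := by
      intro n
      have := graphProb_compl n ((n:ℝ) ^ (-α)) (hasOutsideCommon n)
      linarith
    have h2 : Tendsto (fun n : ℕ => 1 - graphProb n ((n:ℝ) ^ (-α))
        (fun G => ¬ hasOutsideCommon n G)) atTop (nhds (1 - 0)) :=
      tendsto_const_nhds.sub hb
    rw [sub_zero] at h2
    exact h2.congr (fun n => (hcompl n).symm)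
  · exact hkey.mono fun n hn => hn.2.2
end

section
/- Let 1/2 ≤ α < 1 and p = n^{-α}. Then a.a.s. in G(n,p), for every vertex v there exist vertices u and w such that u is adjacent to v, w is not adjacent to v (and w ≠ v), u and v have no common neighbor, and w and v have no common neighbor. -/
open Filter

open Finset Real

/-!
Fix `v` and put `m = (n - 1) p`. By a Chernoff bound, `v` has between `m / 2` and `3 m` neighbours
except with probability `e^{-m/10} + e^{-m}`. Condition on the neighbourhood `N` of `v`: this fixes
only the edges at `v`, so the other edges stay independent of it. If `v` has no pair `u, w` as
required, then every vertex of `N` has a neighbour in `N`, or every vertex outside `N ∪ {v}` has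
one. An event "every `i ∈ W` has a neighbour in `C i`" has probability at most `r ^ #W` as soon as
`(1 - p + p / r) ^ #(C i) - (1 - p) ^ #(C i) ≤ r` for all `i`: expose the set `T ≠ ∅` of
neighbours of some `j ∈ W` in `C j` and induct on `W \ ({j} ∪ T)`, which has to be covered by
edges not yet exposed; summing `P(T) r^{-#T}` over `T ≠ ∅` gives exactly that binomial expression.
For `α ≥ 1/2` we have `#N p ≤ 3 m p ≤ 3`, so `r = 499/500` works and both events have probability
`e^{-Ω(m)}`. The union bound over the `n` vertices costs a factor `n`, and `n e^{-c n^{1-α}} → 0`.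
-/

namespace ErdosRenyi

section Bernoulli

variable {ι : Type*} [Fintype ι] {p : ℝ}

def bern (p : ℝ) (b : Bool) : ℝ := if b then p else 1 - p

def weight (p : ℝ) (f : ι → Bool) : ℝ := ∏ i, bern p (f i)

theorem bern_nonneg (hp0 : 0 ≤ p) (hp1 : p ≤ 1) (b : Bool) : 0 ≤ bern p b := by
  cases b <;> simp [bern] <;> linarith

theorem weight_nonneg (hp0 : 0 ≤ p) (hp1 : p ≤ 1) (f : ι → Bool) : 0 ≤ weight p f :=
  prod_nonneg fun _ _ => bern_nonneg hp0 hp1 _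

theorem weight_eq (f : ι → Bool) :
    weight p f = p ^ #{i | f i} * (1 - p) ^ (Fintype.card ι - #{i | f i}) := by
  have hcard := card_filter_add_card_filter_not (s := univ) (fun i => f i = true)
  simp only [weight, bern, prod_ite, prod_const]
  rw [card_univ] at hcard
  rw [← hcard, Nat.add_sub_cancel_left]

theorem weight_piecewise_mul (J : Set ι) [DecidablePred (· ∈ J)] (f g : ι → Bool) :
    weight p (J.piecewise f g) * weight p (J.piecewise g f) = weight p f * weight p g := by
  simp only [weight, ← prod_mul_distrib]
  refine prod_congr rfl fun i _ => ?_
  by_cases hi : i ∈ J <;> simp [Set.piecewise, hi, mul_comm]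

variable [DecidableEq ι]

open Classical in
noncomputable def prob (p : ℝ) (E : (ι → Bool) → Prop) : ℝ :=
  ∑ f, if E f then weight p f else 0

theorem sum_weight : ∑ f : ι → Bool, weight p f = 1 := by
  simp only [weight]
  rw [← Fintype.prod_sum fun _ b => bern p b]
  simp [bern]

theorem prob_nonneg (hp0 : 0 ≤ p) (hp1 : p ≤ 1) (E : (ι → Bool) → Prop) : 0 ≤ prob p E :=
  sum_nonneg fun f _ => by split_ifs; exacts [weight_nonneg hp0 hp1 f, le_rfl]

theorem prob_mono (hp0 : 0 ≤ p) (hp1 : p ≤ 1) {E F : (ι → Bool) → Prop}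
    (h : ∀ f, E f → F f) : prob p E ≤ prob p F :=
  sum_le_sum fun f _ => by
    by_cases hE : E f
    · simp [hE, h f hE]
    · simp only [hE, if_false]
      split_ifs <;> simp [weight_nonneg hp0 hp1]

theorem prob_congr {E F : (ι → Bool) → Prop} (h : ∀ f, E f ↔ F f) : prob p E = prob p F :=
  congrArg (prob p) (funext fun f => propext (h f))

theorem prob_true : prob p (fun _ : ι → Bool => True) = 1 := by
  simpa [prob] using sum_weight (ι := ι) (p := p)

theorem prob_le_one (hp0 : 0 ≤ p) (hp1 : p ≤ 1) (E : (ι → Bool) → Prop) : prob p E ≤ 1 :=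
  prob_true (ι := ι) (p := p) ▸ prob_mono hp0 hp1 fun _ _ => trivial

theorem prob_not (E : (ι → Bool) → Prop) : prob p (fun f => ¬ E f) = 1 - prob p E := by
  rw [eq_sub_iff_add_eq, prob, prob, ← sum_add_distrib, ← sum_weight (ι := ι) (p := p)]
  exact sum_congr rfl fun f _ => by by_cases hE : E f <;> simp [hE]

theorem prob_or_le (hp0 : 0 ≤ p) (hp1 : p ≤ 1) (E F : (ι → Bool) → Prop) :
    prob p (fun f => E f ∨ F f) ≤ prob p E + prob p F := by
  rw [prob, prob, prob, ← sum_add_distrib]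
  refine sum_le_sum fun f _ => ?_
  by_cases hE : E f <;> by_cases hF : F f <;> simp [hE, hF, weight_nonneg hp0 hp1]

theorem prob_le_sum_of_forall_exists (hp0 : 0 ≤ p) (hp1 : p ≤ 1) {κ : Type*} (s : Finset κ)
    {E : (ι → Bool) → Prop} {F : κ → (ι → Bool) → Prop} (h : ∀ f, E f → ∃ k ∈ s, F k f) :
    prob p E ≤ ∑ k ∈ s, prob p (F k) := by
  classical
  simp only [prob]
  rw [sum_comm]
  refine sum_le_sum fun f _ => ?_
  split_ifs with hE
  · obtain ⟨k, hk, hFk⟩ := h f hE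
    calc weight p f = if F k f then weight p f else 0 := by simp [hFk]
      _ ≤ _ := single_le_sum (f := fun k => if F k f then weight p f else 0)
          (fun k _ => by split_ifs <;> simp [weight_nonneg hp0 hp1]) hk
  · exact sum_nonneg fun k _ => by split_ifs <;> simp [weight_nonneg hp0 hp1]

theorem prob_eval_eq (i : ι) (b : Bool) : prob p (fun f => f i = b) = bern p b := by
  calc prob p (fun f => f i = b)
      = ∑ f : ι → Bool,
          ∏ k, (bern p (f k) * if k = i then (if f k = b then 1 else 0) else 1) := by
        rw [prob]
        refine sum_congr rfl fun f _ => ?_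
        rw [prod_mul_distrib, prod_ite_eq' univ i]
        by_cases h : f i = b <;> simp [h, weight]
    _ = bern p b := by
        rw [← Fintype.prod_sum fun k c =>
            bern p c * if k = i then (if c = b then 1 else 0) else 1,
          prod_eq_single i fun k _ hk => by cases b <;> simp [hk, bern]]
        · cases b <;> simp [bern]
        · simp

theorem prob_and_of_dependsOn {E F : (ι → Bool) → Prop} {J : Set ι}
    (hE : DependsOn E J) (hF : DependsOn F Jᶜ) :
    prob p (fun f => E f ∧ F f) = prob p E * prob p F := by
  classical
  -- exchanging the `J`-coordinates of two configurations preserves the product of their weights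
  let σ : (ι → Bool) × (ι → Bool) → (ι → Bool) × (ι → Bool) :=
    fun q => (J.piecewise q.1 q.2, J.piecewise q.2 q.1)
  have hσ : Function.Involutive σ := fun q => by
    ext i <;> by_cases hi : i ∈ J <;> simp [σ, Set.piecewise, hi]
  have hE' : ∀ f g, E (J.piecewise f g) = E f := fun f g =>
    hE fun i hi => by simp [Set.piecewise, show i ∈ J from hi]
  have hF' : ∀ f g, F (J.piecewise g f) = F f := fun f g =>
    hF fun i hi => by simp [Set.piecewise, show i ∉ J from hi]
  calc prob p (fun f => E f ∧ F f)
      = ∑ q : (ι → Bool) × (ι → Bool),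
          if E q.1 ∧ F q.1 then weight p q.1 * weight p q.2 else 0 := by
        rw [Fintype.sum_prod_type, prob]
        refine sum_congr rfl fun f _ => ?_
        split_ifs <;> simp [← mul_sum, sum_weight]
    _ = ∑ q : (ι → Bool) × (ι → Bool),
          if E q.1 ∧ F q.2 then weight p q.1 * weight p q.2 else 0 := by
        refine (Fintype.sum_bijective σ hσ.bijective _ _ fun q => ?_).symm
        simp only [σ, hE', hF', weight_piecewise_mul]
    _ = prob p E * prob p F := by
        rw [prob, prob, sum_mul_sum, Fintype.sum_prod_type]
        refine sum_congr rfl fun f _ => sum_congr rfl fun g _ => ?_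
        by_cases h1 : E f <;> by_cases h2 : F g <;> simp [h1, h2]

end Bernoulli

section Graph

variable {n : ℕ}

abbrev Slot (n : ℕ) := {e : Sym2 (Fin n) // ¬ e.IsDiag}

def slot {a b : Fin n} (h : a ≠ b) : Slot n := ⟨s(a, b), by simpa using h⟩

theorem slot_comm {a b : Fin n} (h : a ≠ b) : slot h = slot h.symm := Subtype.ext Sym2.eq_swap

def graphOf (f : Slot n → Bool) : SimpleGraph (Fin n) where
  Adj a b := ∃ h : a ≠ b, f (slot h) = true
  symm := ⟨fun _ _ ⟨h, hf⟩ => ⟨h.symm, slot_comm h ▸ hf⟩⟩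
  loopless := ⟨fun _ ⟨h, _⟩ => h rfl⟩

instance (f : Slot n → Bool) : DecidableRel (graphOf f).Adj := fun a b =>
  inferInstanceAs (Decidable (∃ h : a ≠ b, f (slot h) = true))

theorem graphOf_adj {f : Slot n → Bool} {a b : Fin n} (h : a ≠ b) :
    (graphOf f).Adj a b ↔ f (slot h) = true :=
  show (∃ _ : a ≠ b, _) ↔ _ from ⟨fun ⟨_, hf⟩ => hf, fun hf => ⟨h, hf⟩⟩

theorem graphOf_adj_congr {f g : Slot n → Bool} {a b : Fin n}
    (h : ∀ s : Slot n, s.1 = s(a, b) → f s = g s) :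
    (graphOf f).Adj a b ↔ (graphOf g).Adj a b :=
  show (∃ _ : a ≠ b, _) ↔ (∃ _ : a ≠ b, _) from
    ⟨fun ⟨hab, hf⟩ => ⟨hab, h (slot hab) rfl ▸ hf⟩,
      fun ⟨hab, hg⟩ => ⟨hab, (h (slot hab) rfl).symm ▸ hg⟩⟩

theorem mem_edgeSet_graphOf {f : Slot n → Bool} (s : Slot n) :
    s.1 ∈ (graphOf f).edgeSet ↔ f s = true := by
  obtain ⟨e, he⟩ := s
  induction e using Sym2.ind with
  | _ a b => exact graphOf_adj (by simpa using he)

open Classical in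
noncomputable def graphEquiv : (Slot n → Bool) ≃ SimpleGraph (Fin n) where
  toFun := graphOf
  invFun G s := decide (s.1 ∈ G.edgeSet)
  left_inv f := funext fun s => by simp [mem_edgeSet_graphOf]
  right_inv G := by
    ext a b
    by_cases hab : a = b
    · simp [hab]
    · rw [graphOf_adj hab, decide_eq_true_iff]
      rfl

theorem card_edgeSet_graphOf (f : Slot n → Bool) :
    Nat.card (graphOf f).edgeSet = #{s | f s} := by
  let e : (graphOf f).edgeSet ≃ {s : Slot n // f s = true} :=
    { toFun := fun e => ⟨⟨e.1, (graphOf f).not_isDiag_of_mem_edgeSet e.2⟩,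
        (mem_edgeSet_graphOf _).1 e.2⟩
      invFun := fun s => ⟨s.1.1, (mem_edgeSet_graphOf _).2 s.2⟩
      left_inv := fun _ => rfl
      right_inv := fun _ => rfl }
  rw [Nat.card_congr e, Nat.card_eq_fintype_card, Fintype.card_subtype]

theorem graphProb_eq_prob (p : ℝ) (A : SimpleGraph (Fin n) → Prop) :
    graphProb n p A = prob p (fun f => A (graphOf f)) := by
  classical
  refine (Fintype.sum_equiv graphEquiv _ _ fun f => ?_).symm
  rw [weight_eq, Sym2.card_subtype_not_diag, Fintype.card_fin, ← card_edgeSet_graphOf]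
  rfl

end Graph

section Neighbours

def AdjIffMem {V : Type*} (G : SimpleGraph V) (j : V) (C T : Finset V) : Prop :=
  ∀ c ∈ C, (G.Adj c j ↔ c ∈ T)

variable {n : ℕ} {p : ℝ}

def linkSet (j : Fin n) (C : Finset (Fin n)) : Set (Slot n) := {s | ∃ c ∈ C, s.1 = s(c, j)}

theorem dependsOn_adjIffMem (j : Fin n) (C T : Finset (Fin n)) :
    DependsOn (fun f => AdjIffMem (graphOf f) j C T) (linkSet j C) := fun f g hfg =>
  propext <| forall₂_congr fun c hc => by rw [graphOf_adj_congr fun s hs => hfg s ⟨c, hc, hs⟩]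

theorem prob_adjIffMem {j : Fin n} {C : Finset (Fin n)} (hj : j ∉ C) (T : Finset (Fin n)) :
    prob p (fun f => AdjIffMem (graphOf f) j C T) = ∏ c ∈ C, bern p (decide (c ∈ T)) := by
  induction C using Finset.induction_on with
  | empty => simpa [AdjIffMem] using prob_true
  | insert c C hc ih =>
    have hcj : c ≠ j := fun h => hj (h ▸ mem_insert_self c C)
    have hdisj : linkSet j C ⊆ ({slot hcj} : Set (Slot n))ᶜ := by
      rintro s ⟨x, hx, hs⟩ rfl
      rcases Sym2.eq_iff.1 hs with ⟨rfl, -⟩ | ⟨rfl, -⟩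
      exacts [hc hx, hcj rfl]
    have hsingle : DependsOn (fun f : Slot n → Bool => f (slot hcj) = decide (c ∈ T))
        {slot hcj} := fun f g hfg => by simp only [hfg _ rfl]
    rw [prod_insert hc, ← ih (fun h => hj (mem_insert_of_mem h)), ← prob_eval_eq (slot hcj),
      ← prob_and_of_dependsOn hsingle ((dependsOn_adjIffMem j C T).mono hdisj)]
    refine prob_congr fun f => ?_
    rw [AdjIffMem, forall_mem_insert, graphOf_adj hcj]
    cases f (slot hcj) <;> by_cases hcT : c ∈ T <;> simp [hcT, AdjIffMem]

theorem prob_adjIffMem_of_subset {j : Fin n} {C T : Finset (Fin n)} (hj : j ∉ C) (hT : T ⊆ C) :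
    prob p (fun f => AdjIffMem (graphOf f) j C T) = p ^ #T * (1 - p) ^ (#C - #T) := by
  rw [prob_adjIffMem hj]
  simp only [bern, decide_eq_true_eq]
  rw [prod_ite, filter_mem_eq_inter, inter_eq_right.2 hT, filter_notMem_eq_sdiff,
    prod_const, prod_const, card_sdiff_of_subset hT]

theorem sum_prob_adjIffMem_le_one (hp0 : 0 ≤ p) (hp1 : p ≤ 1) {j : Fin n} {C : Finset (Fin n)}
    (hj : j ∉ C) {𝒯 : Finset (Finset (Fin n))} (h𝒯 : 𝒯 ⊆ C.powerset) :
    ∑ T ∈ 𝒯, prob p (fun f => AdjIffMem (graphOf f) j C T) ≤ 1 := calc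
  _ ≤ ∑ T ∈ C.powerset, prob p (fun f => AdjIffMem (graphOf f) j C T) :=
    sum_le_sum_of_subset_of_nonneg h𝒯 fun _ _ _ => prob_nonneg hp0 hp1 _
  _ = 1 := by
    rw [sum_congr rfl fun T hT => prob_adjIffMem_of_subset hj (mem_powerset.1 hT),
      sum_pow_mul_eq_add_pow]
    simp

-- Markov's inequality for `exp (t * #N)`, `N` the neighbours of `j` in `C`.
theorem prob_le_mul_card_adj (hp0 : 0 ≤ p) (hp1 : p ≤ 1) {j : Fin n} {C : Finset (Fin n)}
    (hj : j ∉ C) (x t : ℝ) :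
    prob p (fun f => x ≤ t * #{c ∈ C | (graphOf f).Adj c j}) ≤
      exp (-x + #C * p * (exp t - 1)) := by
  calc prob p (fun f => x ≤ t * #{c ∈ C | (graphOf f).Adj c j})
      ≤ ∑ T ∈ C.powerset with x ≤ t * #T, prob p (fun f => AdjIffMem (graphOf f) j C T) :=
        prob_le_sum_of_forall_exists hp0 hp1 _ fun f hf =>
          ⟨_, mem_filter.2 ⟨mem_powerset.2 (filter_subset _ _), hf⟩, fun c hc => by simp [hc]⟩
    _ ≤ ∑ T ∈ C.powerset with x ≤ t * #T,
          prob p (fun f => AdjIffMem (graphOf f) j C T) * exp (t * #T - x) :=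
        sum_le_sum fun T hT => le_mul_of_one_le_right (prob_nonneg hp0 hp1 _)
          (one_le_exp (by linarith [(mem_filter.1 hT).2]))
    _ ≤ ∑ T ∈ C.powerset, prob p (fun f => AdjIffMem (graphOf f) j C T) * exp (t * #T - x) :=
        sum_le_sum_of_subset_of_nonneg (filter_subset _ _) fun _ _ _ =>
          mul_nonneg (prob_nonneg hp0 hp1 _) (exp_pos _).le
    _ = exp (-x) * (1 + p * (exp t - 1)) ^ #C := by
        rw [show 1 + p * (exp t - 1) = p * exp t + (1 - p) by ring, ← sum_pow_mul_eq_add_pow,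
          mul_sum]
        refine sum_congr rfl fun T hT => ?_
        rw [prob_adjIffMem_of_subset hj (mem_powerset.1 hT),
          show t * #T - x = -x + #T * t by ring, exp_add, exp_nat_mul]
        ring
    _ ≤ exp (-x) * exp (p * (exp t - 1)) ^ #C := by
        gcongr
        · nlinarith [exp_pos t]
        · linarith [add_one_le_exp (p * (exp t - 1))]
    _ = exp (-x + #C * p * (exp t - 1)) := by
        rw [← exp_nat_mul, ← exp_add]
        ring_nf

end Neighbours

section Inequalities

theorem pow_sub_pow_le_pow_sub_pow {a b : ℝ} (ha : 1 ≤ a) (hb0 : 0 ≤ b) (hb1 : b ≤ 1) {k l : ℕ}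
    (hkl : k ≤ l) : a ^ k - b ^ k ≤ a ^ l - b ^ l := by
  linarith [pow_le_pow_right₀ ha hkl, pow_le_pow_of_le_one hb0 hb1 hkl]

theorem pow_le_pow_mul_one_div_pow {r : ℝ} (hr0 : 0 < r) (hr1 : r ≤ 1) {a b c : ℕ}
    (h : a ≤ b + c) : r ^ b ≤ r ^ a * (1 / r) ^ c := calc
  r ^ b = r ^ (b + c) * (1 / r) ^ c := by
    rw [pow_add, one_div_pow, mul_assoc, mul_one_div_cancel (pow_pos hr0 _).ne', mul_one]
  _ ≤ _ := mul_le_mul_of_nonneg_right (pow_le_pow_of_le_one hr0.le hr1 h) (by positivity)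

theorem sum_powerset_erase_empty_pow_mul {R ι : Type*} [CommRing R] [DecidableEq ι] (a b : R)
    (s : Finset ι) :
    ∑ t ∈ s.powerset.erase ∅, a ^ #t * b ^ (#s - #t) = (a + b) ^ #s - b ^ #s := by
  rw [sum_erase_eq_sub (empty_mem_powerset s), sum_pow_mul_eq_add_pow]
  simp

variable {p : ℝ}

theorem pow_sub_pow_le_of_mul_le (hp0 : 0 ≤ p) (hp : p ≤ 1 / 5) {k : ℕ} (hk : k * p ≤ 3) :
    (1 - p + p / (499 / 500)) ^ k - (1 - p) ^ k ≤ 499 / 500 := by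
  have hup : (1 - p + p / (499 / 500)) ^ k ≤ 499 / 496 := calc
    _ ≤ exp (p / 499) ^ k := by
        gcongr
        · linarith
        · linarith [add_one_le_exp (p / 499)]
    _ = exp (k * p / 499) := by rw [← exp_nat_mul]; ring_nf
    _ ≤ exp (3 / 499) := exp_le_exp.2 (by linarith)
    _ ≤ 1 / (1 - 3 / 499) := exp_bound_div_one_sub_of_interval (by norm_num) (by norm_num)
    _ = 499 / 496 := by norm_num
  have hexp4 : exp 4 ≤ 55 := calc
    exp 4 = exp 1 ^ 4 := by rw [← exp_nat_mul]; norm_num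
    _ ≤ 2.7182818286 ^ 4 := by gcongr; exact exp_one_lt_d9.le
    _ ≤ 55 := by norm_num
  have hlow : 1 / 55 ≤ (1 - p) ^ k := calc
    1 / 55 ≤ exp (-4) := by
        rw [exp_neg, one_div]
        exact inv_anti₀ (exp_pos 4) hexp4
    _ ≤ exp (-(5 * p / 4)) ^ k := by
        rw [← exp_nat_mul]
        exact exp_le_exp.2 (by nlinarith)
    _ ≤ (1 - p) ^ k := by
        gcongr
        -- `1 + y ≤ exp y` at `y = 5p/4`, and `(1 - p) (1 + 5p/4) ≥ 1` as `p ≤ 1/5`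
        rw [exp_neg, inv_le_iff_one_le_mul₀ (exp_pos _)]
        nlinarith [add_one_le_exp (5 * p / 4)]
  linarith

theorem pow_le_exp_neg_div (k : ℕ) : (499 / 500 : ℝ) ^ k ≤ exp (-(k / 500)) := calc
  (499 / 500 : ℝ) ^ k ≤ exp (-(1 / 500)) ^ k := by
      gcongr
      linarith [add_one_le_exp (-(1 / 500))]
  _ = exp (-(k / 500)) := by rw [← exp_nat_mul]; ring_nf

end Inequalities

section Cover

variable {V : Type*}

def HasNeighborIn (G : SimpleGraph V) (W : Finset V) (C : V → Finset V) : Prop :=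
  ∀ i ∈ W, ∃ x ∈ C i, G.Adj x i

variable [DecidableEq V]

-- Once the edges from `j` to `C j` are exposed, the vertices of `C j` may no longer use `j`.
def unlink (C : V → Finset V) (j i : V) : Finset V := if i ∈ C j then (C i).erase j else C i

theorem unlink_subset (C : V → Finset V) (j i : V) : unlink C j i ⊆ C i := by
  unfold unlink
  split_ifs
  exacts [erase_subset _ _, subset_rfl]

theorem HasNeighborIn.exists_split {G : SimpleGraph V} {W : Finset V} {C : V → Finset V} {j : V}
    (h : HasNeighborIn G W C) (hj : j ∈ W) :
    ∃ T ∈ (C j).powerset.erase ∅, AdjIffMem G j (C j) T ∧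
      HasNeighborIn G (W \ insert j T) (unlink C j) := by
  classical
  obtain ⟨x, hx, hxj⟩ := h j hj
  refine ⟨{c ∈ C j | G.Adj c j}, mem_erase.2 ⟨ne_empty_of_mem (mem_filter.2 ⟨hx, hxj⟩),
    mem_powerset.2 (filter_subset _ _)⟩, fun c hc => by simp [hc], fun i hi => ?_⟩
  obtain ⟨hiW, hiT⟩ := mem_sdiff.1 hi
  obtain ⟨y, hy, hyi⟩ := h i hiW
  refine ⟨y, ?_, hyi⟩
  unfold unlink
  split_ifs with hij
  · refine mem_erase.2 ⟨?_, hy⟩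
    rintro rfl
    exact hiT (mem_insert_of_mem (mem_filter.2 ⟨hij, hyi.symm⟩))
  · exact hy

variable {n : ℕ} {p : ℝ}

theorem dependsOn_hasNeighborIn {W : Finset (Fin n)} {C : Fin n → Finset (Fin n)} {j : Fin n}
    {D : Finset (Fin n)} (hjW : j ∉ W) (hC : ∀ i ∈ W, i ∈ D → j ∉ C i) :
    DependsOn (fun f => HasNeighborIn (graphOf f) W C) (linkSet j D)ᶜ :=
  fun f g hfg => propext <| forall₂_congr fun i hi => exists_congr fun x =>
    and_congr_right fun hx => graphOf_adj_congr fun s hs => hfg s fun ⟨c, hc, hsc⟩ => by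
      rcases Sym2.eq_iff.1 (hs.symm.trans hsc) with ⟨-, rfl⟩ | ⟨rfl, rfl⟩
      exacts [hjW hi, hC i hi hc hx]

theorem prob_hasNeighborIn_le (hp0 : 0 ≤ p) (hp1 : p ≤ 1) {r : ℝ} (hr0 : 0 < r) (hr1 : r ≤ 1)
    (W : Finset (Fin n)) (C : Fin n → Finset (Fin n)) (hC : ∀ i, i ∉ C i)
    (hr : ∀ i, (1 - p + p / r) ^ #(C i) - (1 - p) ^ #(C i) ≤ r) :
    prob p (fun f => HasNeighborIn (graphOf f) W C) ≤ r ^ #W := by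
  induction W using Finset.strongInduction generalizing C with
  | H W ih =>
  rcases W.eq_empty_or_nonempty with rfl | ⟨j, hj⟩
  · simpa using prob_le_one hp0 hp1 _
  have hq : 1 ≤ 1 - p + p / r := by
    have : p ≤ p / r := le_div_self hp0 hr0 hr1
    linarith
  have hr' (i : Fin n) : (1 - p + p / r) ^ #(unlink C j i) - (1 - p) ^ #(unlink C j i) ≤ r :=
    (pow_sub_pow_le_pow_sub_pow hq (by linarith) (by linarith)
      (card_le_card (unlink_subset C j i))).trans (hr i)
  have hres (T : Finset (Fin n)) :
      prob p (fun f => HasNeighborIn (graphOf f) (W \ insert j T) (unlink C j)) ≤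
        r ^ (#W - 1) * (1 / r) ^ #T := by
    have hlt : W \ insert j T ⊂ W :=
      ⟨sdiff_subset, fun h => (mem_sdiff.1 (h hj)).2 (mem_insert_self j T)⟩
    refine (ih _ hlt _ (fun i hi => hC i (unlink_subset C j i hi)) hr').trans
      (pow_le_pow_mul_one_div_pow hr0 hr1 ?_)
    have := le_card_sdiff (insert j T) W
    have := card_insert_le j T
    omega
  calc prob p (fun f => HasNeighborIn (graphOf f) W C)
      ≤ ∑ T ∈ (C j).powerset.erase ∅, prob p (fun f => AdjIffMem (graphOf f) j (C j) T ∧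
          HasNeighborIn (graphOf f) (W \ insert j T) (unlink C j)) :=
        prob_le_sum_of_forall_exists hp0 hp1 _ fun f h => h.exists_split hj
    _ ≤ ∑ T ∈ (C j).powerset.erase ∅,
          r ^ (#W - 1) * ((p / r) ^ #T * (1 - p) ^ (#(C j) - #T)) := by
        refine sum_le_sum fun T hT => ?_
        rw [prob_and_of_dependsOn (dependsOn_adjIffMem j (C j) T)
            (dependsOn_hasNeighborIn (fun h => (mem_sdiff.1 h).2 (mem_insert_self j T))
              fun i _ hi => by simp [unlink, hi]),
          prob_adjIffMem_of_subset (hC j) (mem_powerset.1 (mem_of_mem_erase hT))]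
        calc _ ≤ p ^ #T * (1 - p) ^ (#(C j) - #T) * (r ^ (#W - 1) * (1 / r) ^ #T) := by
              gcongr
              exact hres T
          _ = _ := by rw [div_eq_mul_one_div p r, mul_pow]; ring
    _ = r ^ (#W - 1) * ((1 - p + p / r) ^ #(C j) - (1 - p) ^ #(C j)) := by
        rw [← mul_sum, sum_powerset_erase_empty_pow_mul]
        ring_nf
    _ ≤ r ^ (#W - 1) * r := by gcongr; exact hr j
    _ = r ^ #W := by rw [← pow_succ, Nat.sub_add_cancel (card_pos.2 ⟨j, hj⟩)]

end Cover

section Vertex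

variable {V : Type*}

def HasLonelyNbrAndNonNbr (G : SimpleGraph V) (v : V) : Prop :=
  ∃ u w : V, G.Adj v u ∧ w ≠ v ∧ ¬ G.Adj v w ∧
    (∀ x : V, x ≠ u → x ≠ v → ¬ (G.Adj x u ∧ G.Adj x v)) ∧
    (∀ x : V, x ≠ w → x ≠ v → ¬ (G.Adj x w ∧ G.Adj x v))

theorem hasNeighborIn_or_hasNeighborIn_of_not_hasLonely [Fintype V] [DecidableEq V]
    {G : SimpleGraph V} {v : V} {N : Finset V} (hN : ∀ c, c ∈ N ↔ G.Adj c v)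
    (h : ¬ HasLonelyNbrAndNonNbr G v) :
    HasNeighborIn G N (fun i => N.erase i) ∨
      HasNeighborIn G (univ \ insert v N) (fun i => N.erase i) := by
  by_contra hc
  simp only [not_or, HasNeighborIn, not_forall, not_exists, not_and] at hc
  obtain ⟨⟨u, hu, hu'⟩, ⟨w, hw, hw'⟩⟩ := hc
  rw [Finset.mem_sdiff, mem_insert, not_or] at hw
  obtain ⟨-, hw⟩ := hw
  exact h ⟨u, w, ((hN u).1 hu).symm, hw.1, fun hvw => hw.2 ((hN w).2 hvw.symm),
    fun x hxu _ hx => hu' x (mem_erase.2 ⟨hxu, (hN x).2 hx.2⟩) hx.1,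
    fun x hxw _ hx => hw' x (mem_erase.2 ⟨hxw, (hN x).2 hx.2⟩) hx.1⟩

variable {n : ℕ} {p : ℝ}

theorem prob_hasNeighborIn_erase_le (hp0 : 0 ≤ p) (hp : p ≤ 1 / 5) {N : Finset (Fin n)}
    (hN : #N * p ≤ 3) (W : Finset (Fin n)) :
    prob p (fun f => HasNeighborIn (graphOf f) W (fun i => N.erase i)) ≤ exp (-(#W / 500)) := by
  refine (prob_hasNeighborIn_le hp0 (by linarith) (by norm_num) (by norm_num) W _
    (fun i => notMem_erase i N) fun i => pow_sub_pow_le_of_mul_le hp0 hp ?_).trans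
    (pow_le_exp_neg_div _)
  exact (mul_le_mul_of_nonneg_right (by exact_mod_cast card_erase_le) hp0).trans hN

theorem prob_adjIffMem_and_hasNeighborIn_le (hp0 : 0 ≤ p) (hp : p ≤ 1 / 5)
    (hmp : ((n : ℝ) - 1) * p * p ≤ 1) {v : Fin n} {N : Finset (Fin n)} (hN : N ⊆ univ.erase v)
    (hlow : ((n : ℝ) - 1) * p / 2 ≤ #N) (hhigh : (#N : ℝ) ≤ 3 * (((n : ℝ) - 1) * p)) :
    prob p (fun f => (AdjIffMem (graphOf f) v (univ.erase v) N) ∧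
        (HasNeighborIn (graphOf f) N (fun i => N.erase i) ∨
          HasNeighborIn (graphOf f) (univ \ insert v N) (fun i => N.erase i))) ≤
      prob p (fun f => AdjIffMem (graphOf f) v (univ.erase v) N) *
        (2 * exp (-(((n : ℝ) - 1) * p / 1000))) := by
  have hvN : v ∉ N := fun h => notMem_erase v univ (hN h)
  have hvW : v ∉ univ \ insert v N := fun h => (Finset.mem_sdiff.1 h).2 (mem_insert_self v N)
  have hvC (i : Fin n) : v ∉ N.erase i := fun h => hvN (mem_of_mem_erase h)
  have hNp : #N * p ≤ 3 := by nlinarith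
  have hout : ((n : ℝ) - 1) * p / 2 ≤ #(univ \ insert v N) := by
    have hcard := card_le_univ (insert v N)
    rw [card_insert_of_notMem hvN, Fintype.card_fin] at hcard
    have hn : (1 : ℝ) ≤ n := by exact_mod_cast v.pos
    rw [card_univ_sdiff, card_insert_of_notMem hvN, Fintype.card_fin, Nat.cast_sub hcard]
    push_cast
    nlinarith [mul_nonneg (sub_nonneg.2 hn) (by linarith : (0 : ℝ) ≤ 1 - 7 / 2 * p)]
  rw [prob_and_of_dependsOn (dependsOn_adjIffMem v _ N) fun f g hfg =>
    congrArg₂ Or (dependsOn_hasNeighborIn hvN (fun i _ _ => hvC i) hfg)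
      (dependsOn_hasNeighborIn hvW (fun i _ _ => hvC i) hfg)]
  refine mul_le_mul_of_nonneg_left ((prob_or_le hp0 (by linarith) _ _).trans ?_)
    (prob_nonneg hp0 (by linarith) _)
  rw [two_mul]
  gcongr
  · exact (prob_hasNeighborIn_erase_le hp0 hp hNp N).trans (exp_le_exp.2 (by linarith))
  · exact (prob_hasNeighborIn_erase_le hp0 hp hNp _).trans (exp_le_exp.2 (by linarith))

theorem prob_card_adj_lt_or_gt_le (hp0 : 0 ≤ p) (hp1 : p ≤ 1) (v : Fin n) :
    prob p (fun f => (#{c ∈ univ.erase v | (graphOf f).Adj c v} : ℝ) < ((n : ℝ) - 1) * p / 2 ∨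
        3 * (((n : ℝ) - 1) * p) < #{c ∈ univ.erase v | (graphOf f).Adj c v}) ≤
      exp (-(((n : ℝ) - 1) * p / 10)) + exp (-(((n : ℝ) - 1) * p)) := by
  have hm : (#(univ.erase v) : ℝ) * p = ((n : ℝ) - 1) * p := by
    rw [card_erase_of_mem (mem_univ v), card_univ, Fintype.card_fin, Nat.cast_sub v.pos]
    simp
  have hm0 : 0 ≤ ((n : ℝ) - 1) * p := mul_nonneg (sub_nonneg.2 (by exact_mod_cast v.pos)) hp0
  refine (prob_or_le hp0 hp1 _ _).trans (add_le_add ?_ ?_)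
  · refine (prob_mono hp0 hp1 fun f h => by linarith).trans
      ((prob_le_mul_card_adj hp0 hp1 (notMem_erase v univ) (-(((n : ℝ) - 1) * p / 2)) (-1)).trans
        (exp_le_exp.2 ?_))
    rw [hm]
    nlinarith [exp_neg_one_lt_d9]
  · refine (prob_mono hp0 hp1 fun f h => by linarith).trans
      ((prob_le_mul_card_adj hp0 hp1 (notMem_erase v univ) (3 * (((n : ℝ) - 1) * p)) 1).trans
        (exp_le_exp.2 ?_))
    rw [hm]
    nlinarith [exp_one_lt_d9]

theorem prob_not_hasLonely_le (hp0 : 0 ≤ p) (hp : p ≤ 1 / 5) (hmp : ((n : ℝ) - 1) * p * p ≤ 1)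
    (v : Fin n) :
    prob p (fun f => ¬ HasLonelyNbrAndNonNbr (graphOf f) v) ≤
      4 * exp (-(((n : ℝ) - 1) * p / 1000)) := by
  have hp1 : p ≤ 1 := by linarith
  set m := ((n : ℝ) - 1) * p with hm
  have hm0 : 0 ≤ m := mul_nonneg (sub_nonneg.2 (by exact_mod_cast v.pos)) hp0
  set 𝒩 := (univ.erase v).powerset.filter fun N : Finset (Fin n) => m / 2 ≤ #N ∧ (#N : ℝ) ≤ 3 * m
  have hsplit : ∀ f : Slot n → Bool, ¬ HasLonelyNbrAndNonNbr (graphOf f) v →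
      ((#{c ∈ univ.erase v | (graphOf f).Adj c v} : ℝ) < m / 2 ∨
        3 * m < #{c ∈ univ.erase v | (graphOf f).Adj c v}) ∨
      ∃ N ∈ 𝒩, AdjIffMem (graphOf f) v (univ.erase v) N ∧
        (HasNeighborIn (graphOf f) N (fun i => N.erase i) ∨
          HasNeighborIn (graphOf f) (univ \ insert v N) (fun i => N.erase i)) := by
    intro f hf
    set N := {c ∈ univ.erase v | (graphOf f).Adj c v}
    by_cases hdeg : m / 2 ≤ #N ∧ (#N : ℝ) ≤ 3 * m
    · refine Or.inr ⟨N, mem_filter.2 ⟨mem_powerset.2 (filter_subset _ _), hdeg⟩,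
        fun c hc => by simp [N, hc], hasNeighborIn_or_hasNeighborIn_of_not_hasLonely
          (fun c => ?_) hf⟩
      simpa [N] using fun h : (graphOf f).Adj c v => h.ne
    · rw [not_and_or, not_le, not_le] at hdeg
      exact Or.inl hdeg
  calc prob p (fun f => ¬ HasLonelyNbrAndNonNbr (graphOf f) v)
      ≤ _ := (prob_mono hp0 hp1 hsplit).trans (prob_or_le hp0 hp1 _ _)
    _ ≤ (exp (-(m / 10)) + exp (-m)) + ∑ N ∈ 𝒩,
          prob p (fun f => AdjIffMem (graphOf f) v (univ.erase v) N) *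
            (2 * exp (-(m / 1000))) := by
        gcongr ?_ + ?_
        · exact prob_card_adj_lt_or_gt_le hp0 hp1 v
        · refine (prob_le_sum_of_forall_exists hp0 hp1 𝒩 fun f h => h).trans
            (sum_le_sum fun N hN => ?_)
          obtain ⟨hN, hlow, hhigh⟩ := mem_filter.1 hN
          exact prob_adjIffMem_and_hasNeighborIn_le hp0 hp hmp (mem_powerset.1 hN) hlow hhigh
    _ ≤ 4 * exp (-(m / 1000)) := by
        have hsum := sum_prob_adjIffMem_le_one hp0 hp1 (notMem_erase v univ)
          (filter_subset _ _ : 𝒩 ⊆ (univ.erase v).powerset)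
        rw [← sum_mul]
        have h1 : exp (-m) ≤ exp (-(m / 1000)) := exp_le_exp.2 (by linarith)
        have h2 : exp (-(m / 10)) ≤ exp (-(m / 1000)) := exp_le_exp.2 (by linarith)
        nlinarith [exp_pos (-(m / 1000))]

theorem one_sub_le_graphProb (hp0 : 0 ≤ p) (hp : p ≤ 1 / 5) (hmp : ((n : ℝ) - 1) * p * p ≤ 1) :
    1 - n * (4 * exp (-(((n : ℝ) - 1) * p / 1000))) ≤
      graphProb n p (fun G => ∀ v, HasLonelyNbrAndNonNbr G v) := by
  have hp1 : p ≤ 1 := by linarith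
  have hunion : prob p (fun f => ¬ ∀ v, HasLonelyNbrAndNonNbr (graphOf f) v) ≤
      ∑ v : Fin n, prob p (fun f => ¬ HasLonelyNbrAndNonNbr (graphOf f) v) :=
    prob_le_sum_of_forall_exists hp0 hp1 univ fun f h =>
      (not_forall.1 h).elim fun v hv => ⟨v, mem_univ v, hv⟩
  have hvertex := sum_le_sum fun v (_ : v ∈ univ) => prob_not_hasLonely_le hp0 hp hmp v
  rw [sum_const, card_univ, Fintype.card_fin, nsmul_eq_mul] at hvertex
  rw [prob_not] at hunion
  rw [graphProb_eq_prob]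
  linarith

end Vertex

section Asymptotics

theorem tendsto_natCast_mul_exp_neg_rpow {c δ : ℝ} (hc : 0 < c) (hδ : 0 < δ) :
    Tendsto (fun n : ℕ => (n : ℝ) * exp (-(c * (n : ℝ) ^ δ))) atTop (nhds 0) := by
  have h := (tendsto_rpow_mul_exp_neg_mul_atTop_nhds_zero δ⁻¹ c hc).comp
    ((tendsto_rpow_atTop hδ).comp tendsto_natCast_atTop_atTop)
  refine h.congr fun n => ?_
  simp [Function.comp_def, rpow_rpow_inv (Nat.cast_nonneg n) hδ.ne', neg_mul]

variable {α : ℝ} {n : ℕ}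

theorem rpow_neg_le_one_div_five (hα : 1 / 2 ≤ α) (hn : 25 ≤ n) : (n : ℝ) ^ (-α) ≤ 1 / 5 := calc
  (n : ℝ) ^ (-α) ≤ (n : ℝ) ^ (-(1 / 2) : ℝ) :=
    rpow_le_rpow_of_exponent_le (by exact_mod_cast (by omega : 1 ≤ n)) (by linarith)
  _ ≤ (25 : ℝ) ^ (-(1 / 2) : ℝ) :=
    rpow_le_rpow_of_nonpos (by norm_num) (by exact_mod_cast hn) (by norm_num)
  _ = 1 / 5 := by
    rw [show (25 : ℝ) = 5 ^ (2 : ℝ) by norm_num, ← rpow_mul (by norm_num)]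
    norm_num

theorem sub_one_mul_rpow_neg_mul_rpow_neg_le_one (hα : 1 / 2 ≤ α) (hn : 1 ≤ n) :
    ((n : ℝ) - 1) * (n : ℝ) ^ (-α) * (n : ℝ) ^ (-α) ≤ 1 := by
  have hn' : (1 : ℝ) ≤ n := by exact_mod_cast hn
  calc ((n : ℝ) - 1) * (n : ℝ) ^ (-α) * (n : ℝ) ^ (-α)
      ≤ (n : ℝ) ^ (1 : ℝ) * (n : ℝ) ^ (-α) * (n : ℝ) ^ (-α) := by
        rw [rpow_one]; gcongr; linarith
    _ = (n : ℝ) ^ (1 - 2 * α) := by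
        rw [← rpow_add (by linarith), ← rpow_add (by linarith)]; ring_nf
    _ ≤ 1 := rpow_le_one_of_one_le_of_nonpos hn' (by linarith)

theorem rpow_one_sub_div_two_le (hn : 2 ≤ n) :
    (n : ℝ) ^ (1 - α) / 2 ≤ ((n : ℝ) - 1) * (n : ℝ) ^ (-α) := by
  have hn' : (2 : ℝ) ≤ n := by exact_mod_cast hn
  rw [sub_eq_add_neg, rpow_add (by linarith), rpow_one]
  nlinarith [rpow_nonneg (by linarith : (0 : ℝ) ≤ n) (-α)]

end Asymptotics

end ErdosRenyi

open ErdosRenyi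

/-- For `1/2 ≤ α < 1` and `p = n^{-α}`, a.a.s. for every vertex `v` of
`G(n,p)` there are vertices `u ~ v` and `w ≁ v` (`w ≠ v`) such that neither `u, v` nor
`w, v` have a common neighbor. -/
theorem aas_neighbors_without_common (α : ℝ) (h0 : 1 / 2 ≤ α) (h1 : α < 1) :
    Tendsto (fun n : ℕ => graphProb n ((n : ℝ) ^ (-α)) (fun G =>
        ∀ v : Fin n, ∃ u w : Fin n,
          G.Adj v u ∧ w ≠ v ∧ ¬ G.Adj v w ∧
          (∀ x : Fin n, x ≠ u → x ≠ v → ¬ (G.Adj x u ∧ G.Adj x v)) ∧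
          (∀ x : Fin n, x ≠ w → x ≠ v → ¬ (G.Adj x w ∧ G.Adj x v))))
      atTop (nhds 1) := by
  have hlim : Tendsto (fun n : ℕ => 1 - 4 * ((n : ℝ) * exp (-(1 / 2000 * (n : ℝ) ^ (1 - α)))))
      atTop (nhds 1) := by
    simpa using
      ((tendsto_natCast_mul_exp_neg_rpow (by norm_num) (by linarith)).const_mul 4).const_sub 1
  refine tendsto_of_tendsto_of_tendsto_of_le_of_le' hlim tendsto_const_nhds ?_ ?_ <;>
    filter_upwards [eventually_ge_atTop 25] with n hn
  · have hp0 : 0 ≤ (n : ℝ) ^ (-α) := by positivity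
    refine le_trans ?_ (one_sub_le_graphProb hp0 (rpow_neg_le_one_div_five h0 hn)
      (sub_one_mul_rpow_neg_mul_rpow_neg_le_one h0 (by omega)))
    have hm := rpow_one_sub_div_two_le (α := α) (by omega : 2 ≤ n)
    have hexp := mul_le_mul_of_nonneg_left (exp_le_exp.2 (by linarith) :
      exp (-(((n : ℝ) - 1) * (n : ℝ) ^ (-α) / 1000)) ≤ exp (-(1 / 2000 * (n : ℝ) ^ (1 - α))))
      (Nat.cast_nonneg n)
    linarith
  · rw [graphProb_eq_prob]
    exact prob_le_one (by positivity) ((rpow_neg_le_one_div_five h0 hn).trans (by norm_num)) _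
end
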